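/- arXiv:math-ph/0703046 — 8 statements merged into one kernel-verified Lean document; each statement's English description precedes it below -/
import Mathlib

section
/- Let μ be three times continuously differentiable on [0,1], non-negative, not identically zero, with μ(1) ≠ 0. Then the kernel k(s) = ∫₀¹ (s^{−α}/Γ(1−α)) μ(α) dα satisfies k(s) ∼ s^{−1}(log s)^{−2} μ(1) as s → 0⁺, i.e. lim_{s→0⁺} s (log s)² k(s) = μ(1). -/
/-! With `L = -log s`, the substitution `α = 1 - t` and `1/Γ(t) = t/Γ(t+1)` give
`s (log s)² k(s) = L² ∫₀¹ t e^{-Lt} G(t) dt` where `G(t) = μ(1-t)/Γ(1+t)`. As `L → ∞` this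
Laplace integral concentrates at `t = 0`: rescaling `u = Lt` turns it into
`∫₀^L u e^{-u} G(u/L) du`, which tends to `G(0) ∫₀^∞ u e^{-u} du = G(0) = μ(1)` by dominated
convergence. -/

open MeasureTheory Filter Set

/-- The kernel `k(s) = ∫₀¹ s^{-α}/Γ(1-α) · μ(α) dα`. -/
noncomputable def kker (μ : ℝ → ℝ) (s : ℝ) : ℝ :=
  ∫ α in (0:ℝ)..1, s ^ (-α) / Real.Gamma (1 - α) * μ α

open Real Topology

lemma integrableOn_mul_exp_neg_Ioi : IntegrableOn (fun u : ℝ => u * exp (-u)) (Ioi 0) := by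
  have h := GammaIntegral_convergent (s := 2) two_pos
  norm_num at h
  simpa only [mul_comm] using h

lemma integral_mul_exp_neg_Ioi : ∫ u in Ioi (0:ℝ), u * exp (-u) = 1 := by
  have h := Gamma_eq_integral (s := 2) two_pos
  norm_num [Gamma_two] at h
  simpa only [mul_comm] using h.symm

lemma sq_mul_integral_mul_exp_neg_mul_eq (g : ℝ → ℝ) {L : ℝ} (hL : L ≠ 0) :
    L ^ 2 * ∫ t in (0:ℝ)..1, t * exp (-(L * t)) * g t =
      ∫ u in (0:ℝ)..L, u * exp (-u) * g (u / L) := by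
  have h := intervalIntegral.integral_comp_mul_right (fun u => u * exp (-u) * g (u / L)) hL
    (a := 0) (b := 1)
  simp only [zero_mul, one_mul, mul_div_cancel_right₀ _ hL, smul_eq_mul] at h
  rw [← mul_inv_cancel_left₀ hL (∫ u in (0:ℝ)..L, _), ← h, sq, mul_assoc,
    ← intervalIntegral.integral_const_mul]
  congr 1
  refine intervalIntegral.integral_congr fun t _ => ?_
  ring_nf

theorem Continuous.tendsto_sq_mul_integral_mul_exp_neg_mul {g : ℝ → ℝ} (hg : Continuous g) :
    Tendsto (fun L : ℝ => L ^ 2 * ∫ t in (0:ℝ)..1, t * exp (-(L * t)) * g t) atTop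
      (𝓝 (g 0)) := by
  obtain ⟨M, hM⟩ := (isCompact_Icc (a := (0:ℝ)) (b := 1)).exists_bound_of_continuousOn
    hg.continuousOn
  have hM0 : 0 ≤ M := (norm_nonneg _).trans (hM 0 ⟨le_rfl, zero_le_one⟩)
  set F : ℝ → ℝ → ℝ := fun L => (Iic L).indicator fun u => u * exp (-u) * g (u / L)
  have hF : ∀ᶠ L in atTop, ∫ u in Ioi 0, F L u =
      L ^ 2 * ∫ t in (0:ℝ)..1, t * exp (-(L * t)) * g t := by
    filter_upwards [eventually_gt_atTop 0] with L hL
    rw [sq_mul_integral_mul_exp_neg_mul_eq g hL.ne', intervalIntegral.integral_of_le hL.le,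
      integral_indicator measurableSet_Iic, Measure.restrict_restrict measurableSet_Iic,
      Iic_inter_Ioi]
  have hmeas : ∀ L, AEStronglyMeasurable (F L) (volume.restrict (Ioi 0)) := fun L =>
    (Continuous.aestronglyMeasurable (by fun_prop)).indicator measurableSet_Iic
  have hbound : ∀ᶠ L in atTop, ∀ᵐ u ∂(volume.restrict (Ioi 0)), ‖F L u‖ ≤ M * (u * exp (-u)) := by
    filter_upwards [eventually_gt_atTop 0] with L hL
    refine (ae_restrict_iff' measurableSet_Ioi).mpr (Eventually.of_forall fun u (hu : 0 < u) => ?_)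
    simp only [F]
    by_cases huL : u ∈ Iic L
    · have hmem : u / L ∈ Icc (0:ℝ) 1 := ⟨by positivity, (div_le_one hL).mpr huL⟩
      rw [indicator_of_mem huL, norm_mul, mul_comm M,
        Real.norm_of_nonneg (by positivity)]
      exact mul_le_mul_of_nonneg_left (hM _ hmem) (by positivity)
    · rw [indicator_of_notMem huL, norm_zero]
      positivity
  have hlim : ∀ u, Tendsto (fun L => F L u) atTop (𝓝 (u * exp (-u) * g 0)) := by
    intro u
    have hgu : Tendsto (fun L => g (u / L)) atTop (𝓝 (g 0)) :=
      (hg.tendsto 0).comp (tendsto_const_nhds.div_atTop tendsto_id)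
    refine (hgu.const_mul _).congr' ?_
    filter_upwards [eventually_ge_atTop u] with L huL
    exact (indicator_of_mem (mem_Iic.mpr huL) (fun u => u * exp (-u) * g (u / L))).symm
  have hDCT := tendsto_integral_filter_of_dominated_convergence _
    (Eventually.of_forall hmeas) hbound (integrableOn_mul_exp_neg_Ioi.const_mul M)
    (Eventually.of_forall hlim)
  rw [integral_mul_const, integral_mul_exp_neg_Ioi, one_mul] at hDCT
  exact hDCT.congr' hF

theorem ContinuousOn.tendsto_sq_mul_integral_mul_exp_neg_mul {G : ℝ → ℝ}
    (hG : ContinuousOn G (Icc 0 1)) :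
    Tendsto (fun L : ℝ => L ^ 2 * ∫ t in (0:ℝ)..1, t * exp (-(L * t)) * G t) atTop
      (𝓝 (G 0)) := by
  set g := IccExtend (zero_le_one' ℝ) ((Icc 0 1).domRestrict G)
  have hgG : EqOn g G (Icc 0 1) := fun t ht => IccExtend_of_mem _ _ ht
  have hg : Continuous g := continuous_IccExtend_iff.mpr hG.domRestrict
  have h := hg.tendsto_sq_mul_integral_mul_exp_neg_mul
  rw [hgG ⟨le_rfl, zero_le_one⟩] at h
  refine h.congr fun L => ?_
  congr 1
  refine intervalIntegral.integral_congr fun t ht => ?_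
  rw [uIcc_of_le zero_le_one] at ht
  simp only [hgG ht]

-- At `t = 0` both sides vanish, because `Gamma 0 = 0`.
lemma Real.inv_Gamma_eq_div_Gamma_add_one (t : ℝ) : (Gamma t)⁻¹ = t / Gamma (t + 1) := by
  rcases eq_or_ne t 0 with rfl | ht
  · simp [Gamma_zero]
  · rw [Gamma_add_one ht, div_mul_cancel_left₀ ht]

lemma Real.continuousOn_Gamma_Ioi : ContinuousOn Gamma (Ioi 0) := fun t (ht : 0 < t) =>
  (differentiableAt_Gamma fun m => ((neg_nonpos.mpr m.cast_nonneg).trans_lt ht).ne').continuousAt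
    |>.continuousWithinAt

lemma mul_kker_eq_integral (μ : ℝ → ℝ) {s : ℝ} (hs : 0 < s) :
    s * kker μ s = ∫ t in (0:ℝ)..1, t * s ^ t * (μ (1 - t) / Gamma (t + 1)) := by
  have h := intervalIntegral.integral_comp_sub_left
    (fun α => s * (s ^ (-α) / Gamma (1 - α) * μ α)) (a := 0) (b := 1) 1
  simp only [sub_zero, sub_self] at h
  rw [kker, ← intervalIntegral.integral_const_mul, ← h]
  refine intervalIntegral.integral_congr fun t _ => ?_
  rw [neg_sub, sub_sub_cancel, rpow_sub_one hs.ne', div_eq_mul_inv _ (Gamma t),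
    inv_Gamma_eq_div_Gamma_add_one]
  field_simp

theorem kker_asymp_at_zero_general (μ : ℝ → ℝ)
    (hC3 : ContDiffOn ℝ 3 μ (Set.Icc 0 1)) :
    Tendsto (fun s : ℝ => s * (Real.log s) ^ 2 * kker μ s)
      (nhdsWithin 0 (Set.Ioi 0)) (nhds (μ 1)) := by
  have hG : ContinuousOn (fun t => μ (1 - t) / Gamma (t + 1)) (Icc 0 1) := by
    refine ContinuousOn.div (hC3.continuousOn.comp (by fun_prop) fun t ht => ?_)
      (continuousOn_Gamma_Ioi.comp (by fun_prop) fun t ht => ?_) fun t ht => ?_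
    · exact ⟨by linarith [ht.2], by linarith [ht.1]⟩
    · exact show 0 < t + 1 by linarith [ht.1]
    · exact (Gamma_pos_of_pos (by linarith [ht.1])).ne'
  have hL : Tendsto (fun s => -log s) (𝓝[>] 0) atTop :=
    tendsto_neg_atBot_atTop.comp tendsto_log_nhdsGT_zero
  have h := hG.tendsto_sq_mul_integral_mul_exp_neg_mul.comp hL
  simp only [sub_zero, zero_add, Gamma_one, div_one] at h
  refine h.congr' ?_
  filter_upwards [self_mem_nhdsWithin] with s (hs : 0 < s)
  simp only [Function.comp_apply, neg_sq, neg_mul, neg_neg]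
  rw [mul_comm s, mul_assoc, mul_kker_eq_integral μ hs]
  simp only [rpow_def_of_pos hs]

theorem kker_asymp_at_zero (μ : ℝ → ℝ)
    (hC3 : ContDiffOn ℝ 3 μ (Set.Icc 0 1))
    (hnn : ∀ α ∈ Set.Icc (0:ℝ) 1, 0 ≤ μ α)
    (hne : ∃ α ∈ Set.Icc (0:ℝ) 1, μ α ≠ 0)
    (h1 : μ 1 ≠ 0) :
    Tendsto (fun s : ℝ => s * (Real.log s) ^ 2 * kker μ s)
      (nhdsWithin 0 (Set.Ioi 0)) (nhds (μ 1)) :=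
  kker_asymp_at_zero_general μ hC3
end

section
/- Let μ be three times continuously differentiable on [0,1], non-negative, not identically zero, with μ(1) ≠ 0. Then the kernel k(s) = ∫₀¹ (s^{−α}/Γ(1−α)) μ(α) dα is differentiable on (0,∞) and its derivative satisfies k′(s) ∼ −s^{−2}(log s)^{−2} μ(1) as s → 0⁺, i.e. lim_{s→0⁺} s² (log s)² k′(s) = −μ(1). -/
open MeasureTheory Filter Set

/-!
Differentiating under the integral sign, `k'(s) = -∫₀¹ α s^{-α-1} μ(α)/Γ(1-α) dα`. Substituting
`α = 1 - t`, writing `L = -log s` and using `1/Γ(t) = t/Γ(t+1)` turns this into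
`s² k'(s) = -∫₀¹ e^{-Lt} t q(t) dt` with `q(t) = (1-t) μ(1-t)/Γ(t+1)`, continuous with
`q(0) = μ(1)`. After rescaling `u = Lt`, dominated convergence (dominating function
`M u e^{-u}`) gives `L² ∫₀¹ e^{-Lt} t q(t) dt → q(0) ∫₀^∞ u e^{-u} du = q(0)` as `L → ∞`.
-/

open Real Topology

theorem Real.continuous_inv_Gamma : Continuous fun x : ℝ => (Gamma x)⁻¹ := by
  have h : ∀ x : ℝ, (Gamma x)⁻¹ = ((Complex.Gamma x)⁻¹).re := fun x => by
    rw [Complex.Gamma_ofReal, ← Complex.ofReal_inv, Complex.ofReal_re]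
  simp only [h]
  exact Complex.continuous_re.comp
    (Complex.differentiable_one_div_Gamma.continuous.comp Complex.continuous_ofReal)

theorem Real.inv_Gamma_eq_mul_inv_Gamma_add_one (t : ℝ) :
    (Gamma t)⁻¹ = t * (Gamma (t + 1))⁻¹ := by
  rcases eq_or_ne t 0 with rfl | ht
  · simp [Gamma_zero]
  · rw [Gamma_add_one ht, mul_inv, mul_inv_cancel_left₀ ht]

theorem hasDerivAt_integral_rpow_neg_mul {w : ℝ → ℝ} (hw : IntervalIntegrable w volume 0 1)
    {s : ℝ} (hs : 0 < s) :
    HasDerivAt (fun x => ∫ α in (0:ℝ)..1, x ^ (-α) * w α)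
      (∫ α in (0:ℝ)..1, -α * s ^ (-α - 1) * w α) s := by
  have hball : ∀ x ∈ Metric.ball s (s / 2), s / 2 ≤ x := fun x hx => by
    rw [Metric.mem_ball, Real.dist_eq, abs_sub_lt_iff] at hx
    linarith
  have hrpow : ∀ {x : ℝ}, 0 < x → ∀ e : ℝ → ℝ, Continuous e → Continuous fun α => x ^ e α :=
    fun hx e he => continuous_const.rpow he fun _ => Or.inl hx.ne'
  have hwm := hw.def'.aestronglyMeasurable
  refine (intervalIntegral.hasDerivAt_integral_of_dominated_loc_of_deriv_le
    (F := fun x α => x ^ (-α) * w α) (F' := fun x α => -α * x ^ (-α - 1) * w α)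
    (bound := fun α => (s / 2) ^ (-α - 1) * |w α|) (Metric.ball_mem_nhds s (half_pos hs))
    (Eventually.of_forall fun x =>
      (measurable_const.pow measurable_neg).aestronglyMeasurable.mul hwm)
    (hw.continuousOn_mul (hrpow hs _ continuous_neg).continuousOn)
    ((continuous_neg.mul (hrpow hs (fun α => -α - 1)
      (continuous_neg.sub continuous_const))).aestronglyMeasurable.mul hwm)
    ?_ (hw.norm.continuousOn_mul (hrpow (half_pos hs) (fun α => -α - 1)
      (continuous_neg.sub continuous_const)).continuousOn) ?_).2
  · refine Eventually.of_forall fun α hα x hx => ?_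
    rw [uIoc_of_le zero_le_one] at hα
    have hxs := hball x hx
    have hx0 : 0 < x := (half_pos hs).trans_le hxs
    rw [norm_mul, norm_mul, norm_neg, Real.norm_of_nonneg hα.1.le,
      Real.norm_of_nonneg (rpow_nonneg hx0.le _), Real.norm_eq_abs]
    gcongr
    calc α * x ^ (-α - 1) ≤ 1 * (s / 2) ^ (-α - 1) :=
          mul_le_mul hα.2 (rpow_le_rpow_of_nonpos (half_pos hs) hxs (by linarith [hα.1]))
            (rpow_nonneg hx0.le _) zero_le_one
      _ = (s / 2) ^ (-α - 1) := one_mul _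
  · refine Eventually.of_forall fun α _ x hx => ?_
    exact (hasDerivAt_rpow_const (Or.inl (half_pos hs |>.trans_le (hball x hx)).ne')).mul_const _

theorem sq_mul_integral_exp_neg_mul_eq (q : ℝ → ℝ) {L : ℝ} (hL : 0 < L) :
    L ^ 2 * ∫ t in (0:ℝ)..1, exp (-(L * t)) * t * q t
      = ∫ u in (0:ℝ)..L, exp (-u) * u * q (u / L) := by
  have h := intervalIntegral.integral_comp_div (fun t => exp (-(L * t)) * t * q t) hL.ne'
    (a := 0) (b := L)
  simp only [zero_div, div_self hL.ne', smul_eq_mul] at h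
  rw [sq, mul_assoc, ← h, ← intervalIntegral.integral_const_mul]
  refine intervalIntegral.integral_congr fun u _ => ?_
  rw [mul_div_cancel₀ u hL.ne']
  field_simp

theorem integral_Ioi_exp_neg_mul_self : ∫ u in Ioi (0:ℝ), exp (-u) * u = 1 := by
  have h := (Gamma_eq_integral two_pos).symm
  norm_num at h
  exact h

theorem integrableOn_exp_neg_mul_self : IntegrableOn (fun u : ℝ => exp (-u) * u) (Ioi 0) := by
  have h := GammaIntegral_convergent two_pos
  norm_num at h
  exact h

theorem tendsto_sq_mul_integral_exp_neg_mul {q : ℝ → ℝ} (hq : ContinuousOn q (Icc 0 1)) :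
    Tendsto (fun L : ℝ => L ^ 2 * ∫ t in (0:ℝ)..1, exp (-(L * t)) * t * q t) atTop
      (𝓝 (q 0)) := by
  obtain ⟨M, hM⟩ := isCompact_Icc.exists_bound_of_continuousOn hq
  have hM0 : 0 ≤ M := (norm_nonneg _).trans (hM 0 ⟨le_rfl, zero_le_one⟩)
  have hmem : ∀ {L u : ℝ}, u ∈ Ioc 0 L → u / L ∈ Icc (0:ℝ) 1 := fun hu =>
    ⟨div_nonneg hu.1.le (hu.1.trans_le hu.2).le, (div_le_one (hu.1.trans_le hu.2)).2 hu.2⟩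
  set F : ℝ → ℝ → ℝ := fun L => (Ioc 0 L).indicator fun u => exp (-u) * u * q (u / L)
  have hF : ∀ᶠ L in atTop,
      ∫ u, F L u = L ^ 2 * ∫ t in (0:ℝ)..1, exp (-(L * t)) * t * q t := by
    filter_upwards [eventually_gt_atTop 0] with L hL
    rw [sq_mul_integral_exp_neg_mul_eq q hL, intervalIntegral.integral_of_le hL.le,
      integral_indicator measurableSet_Ioc]
  have hlim : ∫ u, (Ioi 0).indicator (fun u => exp (-u) * u * q 0) u = q 0 := by
    rw [integral_indicator measurableSet_Ioi, integral_mul_const, integral_Ioi_exp_neg_mul_self,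
      one_mul]
  rw [← hlim]
  refine (tendsto_integral_filter_of_dominated_convergence
    ((Ioi 0).indicator fun u => exp (-u) * u * M) ?_ ?_ ?_ ?_).congr' hF
  · refine Eventually.of_forall fun L => (aestronglyMeasurable_indicator_iff measurableSet_Ioc).2
      (ContinuousOn.aestronglyMeasurable ?_ measurableSet_Ioc)
    exact (continuous_exp.comp continuous_neg).continuousOn.mul continuousOn_id |>.mul
      (hq.comp (continuousOn_id.div_const L) fun u => hmem)
  · refine Eventually.of_forall fun L => Eventually.of_forall fun u => ?_
    simp only [F]
    by_cases hu : u ∈ Ioc 0 L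
    · rw [indicator_of_mem hu, indicator_of_mem (Ioc_subset_Ioi_self hu), norm_mul, norm_mul,
        Real.norm_of_nonneg (exp_pos _).le, Real.norm_of_nonneg hu.1.le]
      exact mul_le_mul_of_nonneg_left (hM _ (hmem hu)) (mul_nonneg (exp_pos _).le hu.1.le)
    · rw [indicator_of_notMem hu, norm_zero]
      exact indicator_nonneg (fun u hu => mul_nonneg (mul_nonneg (exp_pos _).le hu.le) hM0) u
  · exact (integrable_indicator_iff measurableSet_Ioi).2
      (integrableOn_exp_neg_mul_self.mul_const M)
  · refine Eventually.of_forall fun u => ?_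
    rcases le_or_gt u 0 with hu | hu
    · simp [F, indicator_of_notMem (fun h : u ∈ Ioc _ _ => hu.not_gt h.1),
        indicator_of_notMem (fun h : u ∈ Ioi _ => hu.not_gt h)]
    have hdiv : Tendsto (fun L => u / L) atTop (𝓝[Icc 0 1] 0) :=
      tendsto_nhdsWithin_iff.2 ⟨tendsto_const_nhds.div_atTop tendsto_id,
        (eventually_ge_atTop u).mono fun L hL => hmem ⟨hu, hL⟩⟩
    rw [indicator_of_mem (mem_Ioi.2 hu)]
    refine (tendsto_const_nhds.mul ((hq 0 ⟨le_rfl, zero_le_one⟩).tendsto.comp hdiv)).congr' ?_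
    filter_upwards [eventually_ge_atTop u] with L hL
    simp [F, indicator_of_mem (show u ∈ Ioc 0 L from ⟨hu, hL⟩)]

theorem kker_eq (μ : ℝ → ℝ) :
    kker μ = fun s => ∫ α in (0:ℝ)..1, s ^ (-α) * ((Gamma (1 - α))⁻¹ * μ α) := by
  funext s
  simp only [kker, div_eq_mul_inv, mul_assoc]

theorem hasDerivAt_kker {μ : ℝ → ℝ} (hμ : IntervalIntegrable μ volume 0 1) {s : ℝ}
    (hs : 0 < s) :
    HasDerivAt (kker μ) (∫ α in (0:ℝ)..1, -α * s ^ (-α - 1) * ((Gamma (1 - α))⁻¹ * μ α)) s := by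
  rw [kker_eq]
  exact hasDerivAt_integral_rpow_neg_mul (hμ.continuousOn_mul
    (continuous_inv_Gamma.comp (continuous_const.sub continuous_id)).continuousOn) hs

theorem sq_mul_deriv_kker {μ : ℝ → ℝ} (hμ : IntervalIntegrable μ volume 0 1) {s : ℝ}
    (hs : 0 < s) :
    s ^ 2 * deriv (kker μ) s = -∫ t in (0:ℝ)..1,
      exp (-(-log s * t)) * t * ((1 - t) * μ (1 - t) * (Gamma (t + 1))⁻¹) := by
  rw [(hasDerivAt_kker hμ hs).deriv, ← intervalIntegral.integral_neg,
    ← intervalIntegral.integral_const_mul]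
  have h := intervalIntegral.integral_comp_sub_left
    (fun α => s ^ 2 * (-α * s ^ (-α - 1) * ((Gamma (1 - α))⁻¹ * μ α))) (a := 0) (b := 1) 1
  rw [sub_zero, sub_self] at h
  rw [← h]
  refine intervalIntegral.integral_congr fun t _ => ?_
  have hpow : s ^ 2 * s ^ (-(1 - t) - 1) = exp (-(-log s * t)) := by
    rw [show -(1 - t) - 1 = t - 2 by ring, rpow_sub hs, rpow_two, rpow_def_of_pos hs]
    field_simp
  simp only [sub_sub_cancel, inv_Gamma_eq_mul_inv_Gamma_add_one t]
  linear_combination (-(1 - t) * (t * (Gamma (t + 1))⁻¹ * μ (1 - t))) * hpow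

theorem kker_deriv_asymp_at_zero_general (μ : ℝ → ℝ)
    (hC3 : ContDiffOn ℝ 3 μ (Set.Icc 0 1)) :
    (∀ s : ℝ, 0 < s → DifferentiableAt ℝ (kker μ) s) ∧
    Tendsto (fun s : ℝ => s ^ 2 * (Real.log s) ^ 2 * deriv (kker μ) s)
      (nhdsWithin 0 (Set.Ioi 0)) (nhds (-(μ 1))) := by
  have hμ : ContinuousOn μ (Icc 0 1) := hC3.continuousOn
  have hμi : IntervalIntegrable μ volume 0 1 := hμ.intervalIntegrable_of_Icc zero_le_one
  refine ⟨fun s hs => (hasDerivAt_kker hμi hs).differentiableAt, ?_⟩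
  have hq : ContinuousOn (fun t => (1 - t) * μ (1 - t) * (Gamma (t + 1))⁻¹) (Icc 0 1) :=
    ((continuousOn_const.sub continuousOn_id).mul
      (hμ.comp (continuousOn_const.sub continuousOn_id)
        fun t ht => ⟨sub_nonneg.2 ht.2, sub_le_self _ ht.1⟩)).mul
      (continuous_inv_Gamma.comp (continuous_id.add continuous_const)).continuousOn
  have hlog : Tendsto (fun s : ℝ => -log s) (𝓝[>] 0) atTop :=
    tendsto_neg_atBot_atTop.comp tendsto_log_nhdsGT_zero
  have h := ((tendsto_sq_mul_integral_exp_neg_mul hq).comp hlog).neg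
  simp only [sub_zero, one_mul, zero_add, Gamma_one, inv_one, mul_one] at h
  refine h.congr' (eventually_nhdsWithin_of_forall fun s hs => ?_)
  simp only [Function.comp_apply, mul_right_comm _ _ (deriv _ _), sq_mul_deriv_kker hμi hs,
    neg_sq]
  ring

theorem kker_deriv_asymp_at_zero (μ : ℝ → ℝ)
    (hC3 : ContDiffOn ℝ 3 μ (Set.Icc 0 1))
    (hnn : ∀ α ∈ Set.Icc (0:ℝ) 1, 0 ≤ μ α)
    (hne : ∃ α ∈ Set.Icc (0:ℝ) 1, μ α ≠ 0)
    (h1 : μ 1 ≠ 0) :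
    (∀ s : ℝ, 0 < s → DifferentiableAt ℝ (kker μ) s) ∧
    Tendsto (fun s : ℝ => s ^ 2 * (Real.log s) ^ 2 * deriv (kker μ) s)
      (nhdsWithin 0 (Set.Ioi 0)) (nhds (-(μ 1))) :=
  kker_deriv_asymp_at_zero_general μ hC3
end

section
/- Let μ be a continuous non-negative function on [0,1], not identically zero. Then for every complex number p with Re p > 0, the function s ↦ k(s) e^{−ps} is integrable on (0,∞) and ∫₀^∞ k(s) e^{−ps} ds = ∫₀¹ p^{α−1} μ(α) dα = K(p), where p^{α−1} = exp((α−1) Log p) uses the principal branch of the logarithm. -/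
open MeasureTheory Filter Set
open Topology

namespace LaplaceKerAux

lemma integrable_rpow_exp {a c : ℝ} (ha : -1 < a) (hc : 0 < c) :
    IntegrableOn (fun s : ℝ => s ^ a * Real.exp (-c * s)) (Ioi 0) := by
  have h := integrableOn_rpow_mul_exp_neg_mul_rpow ha zero_lt_one hc
  exact h.congr_fun (fun x _ => by simp only [Real.rpow_one]) measurableSet_Ioi

lemma norm_integrand (a : ℝ) (p : ℂ) {s : ℝ} (hs : 0 < s) :
    ‖((s ^ (-a) : ℝ) : ℂ) * Complex.exp (-p * s)‖ = s ^ (-a) * Real.exp (-p.re * s) := by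
  rw [norm_mul, Complex.norm_real, Real.norm_eq_abs, Complex.norm_exp]
  have h : (-p * s).re = -p.re * s := by simp
  rw [h, abs_of_pos (Real.rpow_pos_of_pos hs _)]

lemma contOn (a : ℝ) (p : ℂ) :
    ContinuousOn (fun s : ℝ => ((s ^ (-a) : ℝ) : ℂ) * Complex.exp (-p * s)) (Ioi 0) := by
  apply ContinuousOn.mul
  · exact Complex.continuous_ofReal.comp_continuousOn
      (ContinuousOn.rpow_const continuousOn_id (fun x hx => Or.inl (ne_of_gt hx)))
  · exact (Complex.continuous_exp.comp
      ((continuous_const.mul Complex.continuous_ofReal))).continuousOn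

lemma intOn {a : ℝ} (ha : a < 1) {p : ℂ} (hp : 0 < p.re) :
    IntegrableOn (fun s : ℝ => ((s ^ (-a) : ℝ) : ℂ) * Complex.exp (-p * s)) (Ioi 0) := by
  refine Integrable.mono' (integrable_rpow_exp (a := -a) (by linarith) hp)
    ((contOn a p).aestronglyMeasurable measurableSet_Ioi) ?_
  filter_upwards [ae_restrict_mem measurableSet_Ioi] with s hs
  rw [norm_integrand a p hs]

lemma hasDeriv_g {a : ℝ} (ha1 : a < 1) {p₀ : ℂ} (hp₀ : 0 < p₀.re) :
    HasDerivAt (fun p : ℂ => ∫ s in Ioi (0:ℝ), ((s ^ (-a) : ℝ) : ℂ) * Complex.exp (-p * s))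
      (∫ s in Ioi (0:ℝ), ((s ^ (-a) : ℝ) : ℂ) * (-(s:ℂ) * Complex.exp (-p₀ * s))) p₀ := by
  have hε : (0:ℝ) < p₀.re / 2 := by linarith
  have H := hasDerivAt_integral_of_dominated_loc_of_deriv_le
    (F := fun (p : ℂ) (s : ℝ) => ((s ^ (-a) : ℝ) : ℂ) * Complex.exp (-p * s))
    (F' := fun (p : ℂ) (s : ℝ) => ((s ^ (-a) : ℝ) : ℂ) * (-(s:ℂ) * Complex.exp (-p * s)))
    (μ := volume.restrict (Ioi 0)) (x₀ := p₀)
    (bound := fun s => s ^ (1 - a) * Real.exp (-(p₀.re / 2) * s))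
    (Metric.ball_mem_nhds p₀ hε)
    (Eventually.of_forall fun p => (contOn a p).aestronglyMeasurable measurableSet_Ioi)
    (intOn ha1 hp₀)
    ?meas' ?bound ?int ?deriv
  · exact H.2
  case meas' =>
    apply ContinuousOn.aestronglyMeasurable _ measurableSet_Ioi
    exact ((contOn a p₀).mul ((Complex.continuous_ofReal.neg).continuousOn)).congr
      (fun x _ => by simp only [Pi.mul_apply, Pi.neg_apply]; ring)
  case bound =>
    filter_upwards [ae_restrict_mem measurableSet_Ioi] with s hs p hp
    have hs' : (0:ℝ) < s := hs
    have hre : p₀.re / 2 ≤ p.re := by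
      have h1 : |p.re - p₀.re| ≤ ‖p - p₀‖ := by
        simpa using Complex.abs_re_le_norm (p - p₀)
      have h2 : ‖p - p₀‖ < p₀.re / 2 := by
        simpa [Complex.dist_eq] using (Metric.mem_ball.mp hp)
      have := abs_le.mp h1
      linarith [this.1]
    have hnorm : ‖((s ^ (-a) : ℝ) : ℂ) * (-(s:ℂ) * Complex.exp (-p * s))‖
        = s ^ (-a) * (s * Real.exp (-p.re * s)) := by
      rw [norm_mul, norm_mul, norm_neg, Complex.norm_real, Complex.norm_real,
        Real.norm_eq_abs, Real.norm_eq_abs, Complex.norm_exp]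
      have h : (-p * s).re = -p.re * s := by simp
      rw [h, abs_of_pos (Real.rpow_pos_of_pos hs' _), abs_of_pos hs']
    rw [hnorm]
    have hpow : s ^ (-a) * s = s ^ (1 - a) := by
      nth_rewrite 2 [← Real.rpow_one s]
      rw [← Real.rpow_add hs']
      ring_nf
    calc s ^ (-a) * (s * Real.exp (-p.re * s))
        = (s ^ (-a) * s) * Real.exp (-p.re * s) := by ring
      _ ≤ (s ^ (-a) * s) * Real.exp (-(p₀.re / 2) * s) := by
          apply mul_le_mul_of_nonneg_left
          · apply Real.exp_le_exp.mpr
            nlinarith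
          · positivity
      _ = s ^ (1 - a) * Real.exp (-(p₀.re / 2) * s) := by rw [hpow]
  case int => exact integrable_rpow_exp (a := 1 - a) (by linarith) hε
  case deriv =>
    filter_upwards [ae_restrict_mem measurableSet_Ioi] with s _ p _
    have h1 : HasDerivAt (fun p : ℂ => -p * (s:ℂ)) (-(s:ℂ)) p := by
      simpa using ((hasDerivAt_id p).neg.mul_const (s:ℂ))
    have h2 := (h1.cexp).const_mul ((s ^ (-a) : ℝ) : ℂ)
    refine h2.congr_deriv ?_
    ring

lemma real_case {a : ℝ} (ha0 : 0 < a) (ha1 : a < 1) {x : ℝ} (hx : 0 < x) :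
    ∫ s in Ioi (0:ℝ), ((s ^ (-a) : ℝ) : ℂ) * Complex.exp (-(x:ℂ) * s)
      = (Real.Gamma (1 - a) : ℂ) * Complex.exp (((a:ℂ) - 1) * Complex.log x) := by
  have h := Complex.integral_cpow_mul_exp_neg_mul_Ioi
      (a := (1 - a : ℂ)) (r := x) (by simp [Complex.sub_re]; linarith) hx
  have hL : (∫ (t:ℝ) in Ioi 0, (t:ℂ) ^ ((1 - a : ℂ) - 1) * Complex.exp (-(x * t)))
      = ∫ s in Ioi (0:ℝ), ((s ^ (-a) : ℝ) : ℂ) * Complex.exp (-(x:ℂ) * s) := by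
    refine setIntegral_congr_fun measurableSet_Ioi (fun t ht => ?_)
    have h1 : ((t ^ (-a) : ℝ) : ℂ) = (t:ℂ) ^ ((1 - a : ℂ) - 1) := by
      rw [Complex.ofReal_cpow (le_of_lt ht)]
      push_cast
      ring_nf
    rw [h1]
    ring_nf
  have hR : ((1 / x : ℂ)) ^ (1 - a : ℂ) * Complex.Gamma (1 - a : ℂ)
      = (Real.Gamma (1 - a) : ℂ) * Complex.exp (((a:ℂ) - 1) * Complex.log x) := by
    have hg : Complex.Gamma (1 - a : ℂ) = (Real.Gamma (1 - a) : ℂ) := by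
      rw [show ((1:ℂ) - a) = ((1 - a : ℝ) : ℂ) by push_cast; ring, Complex.Gamma_ofReal]
    have hlog : Complex.log ((1 / x : ℝ) : ℂ) = -(Complex.log x) := by
      rw [← Complex.ofReal_log (le_of_lt hx), ← Complex.ofReal_log (by positivity)]
      rw [one_div, Real.log_inv]
      push_cast; ring
    have hb : ((1 / x : ℂ)) ^ (1 - a : ℂ)
        = Complex.exp (((a:ℂ) - 1) * Complex.log x) := by
      rw [show ((1 / x : ℂ)) = ((1 / x : ℝ) : ℂ) by push_cast; ring]
      rw [Complex.cpow_def_of_ne_zero (by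
        simp only [ne_eq, Complex.ofReal_eq_zero]
        positivity), hlog]
      congr 1; ring
    rw [hb, hg]; ring
  rw [← hL, h, hR]

lemma key {a : ℝ} (ha0 : 0 < a) (ha1 : a < 1) {p : ℂ} (hp : 0 < p.re) :
    ∫ s in Ioi (0:ℝ), ((s ^ (-a) : ℝ) : ℂ) * Complex.exp (-p * s)
      = (Real.Gamma (1 - a) : ℂ) * Complex.exp (((a:ℂ) - 1) * Complex.log p) := by
  set U : Set ℂ := {z : ℂ | 0 < z.re} with hU
  have hUopen : IsOpen U := isOpen_lt continuous_const Complex.continuous_re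
  set g : ℂ → ℂ := fun q => ∫ s in Ioi (0:ℝ), ((s ^ (-a) : ℝ) : ℂ) * Complex.exp (-q * s)
    with hgdef
  set h : ℂ → ℂ := fun q => (Real.Gamma (1 - a) : ℂ) * Complex.exp (((a:ℂ) - 1) * Complex.log q)
    with hhdef
  have hg : AnalyticOnNhd ℂ g U :=
    DifferentiableOn.analyticOnNhd
      (fun z hz => ((hasDeriv_g ha1 hz).differentiableAt).differentiableWithinAt) hUopen
  have hh : AnalyticOnNhd ℂ h U := by
    apply DifferentiableOn.analyticOnNhd _ hUopen
    intro z hz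
    have hlog : DifferentiableAt ℂ Complex.log z :=
      Complex.differentiableAt_log (Complex.mem_slitPlane_iff.mpr (Or.inl hz))
    exact (((hlog.const_mul _).cexp).const_mul _).differentiableWithinAt
  have heq : EqOn g h U := by
    apply hg.eqOn_of_preconnected_of_frequently_eq hh
      (convex_halfSpace_re_gt 0).isPreconnected
      (show (1:ℂ) ∈ U by simp [hU])
    have htend : Tendsto (fun n : ℕ => ((1 + ((n:ℝ)+1)⁻¹ : ℝ) : ℂ)) atTop
        (nhdsWithin (1:ℂ) {(1:ℂ)}ᶜ) := by
      rw [tendsto_nhdsWithin_iff]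
      constructor
      · have h1 : Tendsto (fun n : ℕ => (1 + ((n:ℝ)+1)⁻¹ : ℝ)) atTop (𝓝 1) := by
          have h0 : Tendsto (fun n : ℕ => ((n:ℝ)+1)⁻¹) atTop (𝓝 0) := by
            simpa using tendsto_one_div_add_atTop_nhds_zero_nat (𝕜 := ℝ)
          simpa using tendsto_const_nhds.add h0
        have h2 := (Complex.continuous_ofReal.tendsto 1).comp h1
        simpa only [Function.comp_def, Complex.ofReal_one] using h2
      · filter_upwards with n
        simp only [mem_compl_iff, mem_singleton_iff]
        intro hcon
        have h2 : (1 + ((n:ℝ)+1)⁻¹ : ℝ) = 1 := by exact_mod_cast hcon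
        have h3 : (0:ℝ) < ((n:ℝ)+1)⁻¹ := by positivity
        linarith
    refine htend.frequently (Eventually.of_forall (fun n => ?_)).frequently
    have hx : (0:ℝ) < 1 + ((n:ℝ)+1)⁻¹ := by positivity
    exact real_case ha0 ha1 hx
  exact heq (show p ∈ U from hp)

lemma real_integral_val {a r : ℝ} (ha1 : a < 1) (hr : 0 < r) :
    ∫ s in Ioi (0:ℝ), s ^ (-a) * Real.exp (-(r * s))
      = (1 / r) ^ (1 - a) * Real.Gamma (1 - a) := by
  have h := Real.integral_rpow_mul_exp_neg_mul_Ioi (a := 1 - a) (r := r) (by linarith) hr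
  rw [show (1 - a) - 1 = -a by ring] at h
  exact h

end LaplaceKerAux

open LaplaceKerAux

/-- `K(p) = ∫₀¹ p^{α-1} μ(α) dα`, with `p^{α-1} = exp((α-1) Log p)` using the
principal branch of the logarithm. -/
noncomputable def Kfun (μ : ℝ → ℝ) (p : ℂ) : ℂ :=
  ∫ α in (0:ℝ)..1, Complex.exp (((α : ℂ) - 1) * Complex.log p) * (μ α : ℂ)

theorem laplace_transform_of_kker (μ : ℝ → ℝ)
    (hc : ContinuousOn μ (Set.Icc 0 1))
    (hnn : ∀ α ∈ Set.Icc (0:ℝ) 1, 0 ≤ μ α)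
    (hne : ∃ α ∈ Set.Icc (0:ℝ) 1, μ α ≠ 0)
    (p : ℂ) (hp : 0 < p.re) :
    IntegrableOn (fun s : ℝ => (kker μ s : ℂ) * Complex.exp (-p * s)) (Set.Ioi 0) ∧
    ∫ s in Set.Ioi (0:ℝ), (kker μ s : ℂ) * Complex.exp (-p * s) = Kfun μ p := by
  classical
  set r : ℝ := p.re with hrdef
  have hr : 0 < r := hp
  -- continuous extension of μ
  set ν : ℝ → ℝ := fun α => μ (max 0 (min 1 α)) with hνdef
  have hνcont : Continuous ν := by
    apply hc.comp_continuous (continuous_const.max (continuous_const.min continuous_id))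
    intro x
    exact ⟨le_max_left _ _, max_le (by norm_num) (min_le_left _ _)⟩
  have hνeq : ∀ α ∈ Ioc (0:ℝ) 1, ν α = μ α := by
    intro α hα
    have h1 : min 1 α = α := min_eq_right hα.2
    rw [hνdef]
    simp only [h1, max_eq_right (le_of_lt hα.1)]
  -- the product function
  set f : ℝ × ℝ → ℂ := fun z =>
    ((z.1 ^ (-z.2) : ℝ) : ℂ) * (((Real.Gamma (1 - z.2))⁻¹ : ℝ) : ℂ) * ((ν z.2 : ℝ) : ℂ)
      * Complex.exp (-p * z.1) with hfdef
  -- ae membership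
  have hae : ∀ᵐ z ∂((volume.restrict (Ioi (0:ℝ))).prod (volume.restrict (Ioc (0:ℝ) 1))),
      z ∈ Ioi (0:ℝ) ×ˢ Ioc (0:ℝ) 1 := by
    rw [Measure.prod_restrict]
    exact ae_restrict_mem (measurableSet_Ioi.prod measurableSet_Ioc)
  -- measurability
  have hmeas : AEStronglyMeasurable f
      ((volume.restrict (Ioi (0:ℝ))).prod (volume.restrict (Ioc (0:ℝ) 1))) := by
    have h1 : AEStronglyMeasurable (fun z : ℝ × ℝ => ((z.1 ^ (-z.2) : ℝ) : ℂ))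
        ((volume.restrict (Ioi (0:ℝ))).prod (volume.restrict (Ioc (0:ℝ) 1))) := by
      have hm : Measurable (fun z : ℝ × ℝ => ((Real.exp (Real.log z.1 * (-z.2)) : ℝ) : ℂ)) :=
        Complex.measurable_ofReal.comp (Real.measurable_exp.comp
          ((Real.measurable_log.comp measurable_fst).mul measurable_snd.neg))
      refine hm.aestronglyMeasurable.congr ?_
      filter_upwards [hae] with z hz
      rw [Real.rpow_def_of_pos hz.1]
    have h2 : AEStronglyMeasurable
        (fun z : ℝ × ℝ => (((Real.Gamma (1 - z.2))⁻¹ : ℝ) : ℂ))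
        ((volume.restrict (Ioi (0:ℝ))).prod (volume.restrict (Ioc (0:ℝ) 1))) := by
      have hco : ContinuousOn (fun α : ℝ => (((Real.Gamma (1 - α))⁻¹ : ℝ) : ℂ)) (Ioo 0 1) := by
        intro α hα
        have h1α : (0:ℝ) < 1 - α := by linarith [hα.2]
        have hG : ContinuousAt Real.Gamma (1 - α) := by
          refine (Real.differentiableAt_Gamma ?_).continuousAt
          intro m hcon
          have hm0 : -(m:ℝ) ≤ 0 := neg_nonpos.mpr (Nat.cast_nonneg m)
          nlinarith
        have hca : ContinuousAt (fun α : ℝ => (((Real.Gamma (1 - α))⁻¹ : ℝ) : ℂ)) α := by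
          apply Complex.continuous_ofReal.continuousAt.comp
          apply ContinuousAt.inv₀
          · exact hG.comp ((continuous_const.sub continuous_id).continuousAt)
          · exact ne_of_gt (Real.Gamma_pos_of_pos h1α)
        exact hca.continuousWithinAt
      have ha : AEStronglyMeasurable (fun α : ℝ => (((Real.Gamma (1 - α))⁻¹ : ℝ) : ℂ))
          (volume.restrict (Ioc (0:ℝ) 1)) := by
        rw [← Measure.restrict_congr_set Ioo_ae_eq_Ioc]
        exact hco.aestronglyMeasurable measurableSet_Ioo
      exact ha.comp_snd
    have h3 : AEStronglyMeasurable (fun z : ℝ × ℝ => ((ν z.2 : ℝ) : ℂ))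
        ((volume.restrict (Ioi (0:ℝ))).prod (volume.restrict (Ioc (0:ℝ) 1))) :=
      ((Complex.continuous_ofReal.comp hνcont).comp continuous_snd).aestronglyMeasurable
    have h4 : AEStronglyMeasurable (fun z : ℝ × ℝ => Complex.exp (-p * z.1))
        ((volume.restrict (Ioi (0:ℝ))).prod (volume.restrict (Ioc (0:ℝ) 1))) :=
      (Complex.continuous_exp.comp
        (continuous_const.mul (Complex.continuous_ofReal.comp continuous_fst))).aestronglyMeasurable
    exact ((h1.mul h2).mul h3).mul h4
  -- a.e. in α: α ∈ Ioo 0 1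
  have haeα : ∀ᵐ α ∂(volume.restrict (Ioc (0:ℝ) 1)), α ∈ Ioo (0:ℝ) 1 := by
    have h2 : ∀ᵐ α : ℝ ∂volume, α ≠ 1 := by
      rw [ae_iff]
      have he : {α : ℝ | ¬ α ≠ 1} = {1} := by ext x; simp
      rw [he]
      exact measure_singleton 1
    filter_upwards [ae_restrict_mem measurableSet_Ioc, ae_restrict_of_ae h2] with α hα hα1
    exact ⟨hα.1, lt_of_le_of_ne hα.2 hα1⟩
  -- norm of f
  have hnormf : ∀ α ∈ Ioo (0:ℝ) 1, ∀ s ∈ Ioi (0:ℝ),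
      ‖f (s, α)‖ = (s ^ (-α) * Real.exp (-(r * s))) * ((Real.Gamma (1 - α))⁻¹ * |ν α|) := by
    intro α hα s hs
    have hs' : (0:ℝ) < s := hs
    have hΓ : 0 < Real.Gamma (1 - α) := Real.Gamma_pos_of_pos (by linarith [hα.2])
    rw [hfdef]
    simp only
    rw [norm_mul, norm_mul, norm_mul, Complex.norm_real, Complex.norm_real,
      Complex.norm_real, Real.norm_eq_abs, Real.norm_eq_abs,
      Real.norm_eq_abs, Complex.norm_exp]
    have hre : (-p * s).re = -(r * s) := by simp [hrdef]
    rw [hre, abs_of_pos (Real.rpow_pos_of_pos hs' _), abs_of_pos (inv_pos.mpr hΓ)]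
    ring
  -- integrability of f on the product
  have hInt : Integrable f
      ((volume.restrict (Ioi (0:ℝ))).prod (volume.restrict (Ioc (0:ℝ) 1))) := by
    rw [MeasureTheory.integrable_prod_iff' hmeas]
    constructor
    · filter_upwards [haeα] with α hα
      have h := (intOn hα.2 hp).const_mul
        ((((Real.Gamma (1 - α))⁻¹ : ℝ) : ℂ) * ((ν α : ℝ) : ℂ))
      refine h.congr (Eventually.of_forall (fun s => ?_))
      rw [hfdef]
      simp only
      ring
    · have hmeasnorm : AEStronglyMeasurable
          (fun α : ℝ => ∫ s, ‖f (s, α)‖ ∂(volume.restrict (Ioi (0:ℝ))))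
          (volume.restrict (Ioc (0:ℝ) 1)) := hmeas.prod_swap.norm.integral_prod_right'
      refine Integrable.mono' (g := fun α : ℝ =>
          Real.exp (Real.log (1 / r) * (1 - α)) * |ν α|) ?_ hmeasnorm ?_
      · exact ((Real.continuous_exp.comp
          (continuous_const.mul (continuous_const.sub continuous_id))).mul
            hνcont.abs).integrableOn_Ioc
      · filter_upwards [haeα] with α hα
        have hΓ : 0 < Real.Gamma (1 - α) := Real.Gamma_pos_of_pos (by linarith [hα.2])
        have hval : (∫ s, ‖f (s, α)‖ ∂(volume.restrict (Ioi (0:ℝ))))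
            = Real.exp (Real.log (1 / r) * (1 - α)) * |ν α| := by
          have h1 : (∫ s, ‖f (s, α)‖ ∂(volume.restrict (Ioi (0:ℝ))))
              = ∫ s in Ioi (0:ℝ),
                  (s ^ (-α) * Real.exp (-(r * s))) * ((Real.Gamma (1 - α))⁻¹ * |ν α|) :=
            setIntegral_congr_fun measurableSet_Ioi (fun s hs => hnormf α hα s hs)
          rw [h1, integral_mul_const, real_integral_val hα.2 hr,
            show (1 / r) ^ (1 - α) = Real.exp (Real.log (1/r) * (1 - α)) from
              Real.rpow_def_of_pos (by positivity) _]
          field_simp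
        rw [Real.norm_eq_abs,
          abs_of_nonneg (integral_nonneg (fun s => norm_nonneg _)), hval]
  -- pointwise identity between the kernel integrand and the α-integral of f
  have hker : ∀ s : ℝ, (kker μ s : ℂ) * Complex.exp (-p * s)
      = ∫ α in Ioc (0:ℝ) 1, f (s, α) := by
    intro s
    rw [kker, intervalIntegral.integral_of_le zero_le_one,
      show ((∫ x in Ioc (0:ℝ) 1, s ^ (-x) / Real.Gamma (1 - x) * μ x : ℝ) : ℂ)
        = ∫ x in Ioc (0:ℝ) 1, ((s ^ (-x) / Real.Gamma (1 - x) * μ x : ℝ) : ℂ) from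
        integral_ofReal.symm,
      ← integral_mul_const]
    refine setIntegral_congr_fun measurableSet_Ioc (fun α hα => ?_)
    rw [hfdef]
    simp only
    rw [hνeq α hα]
    push_cast
    ring
  constructor
  · -- integrability
    have h := hInt.integral_prod_left
    refine h.congr (Eventually.of_forall (fun s => ?_))
    exact (hker s).symm
  · -- value
    have hswap := MeasureTheory.integral_integral_swap
      (f := fun (s : ℝ) (α : ℝ) => f (s, α)) (by exact hInt)
    calc ∫ s in Ioi (0:ℝ), (kker μ s : ℂ) * Complex.exp (-p * s)
        = ∫ s in Ioi (0:ℝ), ∫ α in Ioc (0:ℝ) 1, f (s, α) :=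
          setIntegral_congr_fun measurableSet_Ioi (fun s _ => hker s)
      _ = ∫ α in Ioc (0:ℝ) 1, ∫ s in Ioi (0:ℝ), f (s, α) := hswap
      _ = ∫ α in Ioc (0:ℝ) 1,
            Complex.exp (((α : ℂ) - 1) * Complex.log p) * ((μ α : ℝ) : ℂ) := by
          refine integral_congr_ae ?_
          filter_upwards [haeα, ae_restrict_mem measurableSet_Ioc] with α hα hα'
          have hΓ : (0:ℝ) < Real.Gamma (1 - α) := Real.Gamma_pos_of_pos (by linarith [hα.2])
          have hpt : ∀ s : ℝ, f (s, α)
              = ((((Real.Gamma (1 - α))⁻¹ : ℝ) : ℂ) * ((ν α : ℝ) : ℂ))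
                * (((s ^ (-α) : ℝ) : ℂ) * Complex.exp (-p * s)) := by
            intro s
            rw [hfdef]
            simp only
            ring
          rw [show (fun s : ℝ => f (s, α))
              = fun s : ℝ => ((((Real.Gamma (1 - α))⁻¹ : ℝ) : ℂ) * ((ν α : ℝ) : ℂ))
                * (((s ^ (-α) : ℝ) : ℂ) * Complex.exp (-p * s)) from funext hpt]
          rw [integral_const_mul, key hα.1 hα.2 hp, hνeq α hα']
          have hΓne : ((Real.Gamma (1 - α) : ℝ) : ℂ) ≠ 0 := by
            simp only [ne_eq, Complex.ofReal_eq_zero]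
            exact ne_of_gt hΓ
          field_simp
          push_cast
          field_simp
      _ = Kfun μ p := by rw [Kfun, intervalIntegral.integral_of_le zero_le_one]
end

section
/- Let μ be twice continuously differentiable on [0,1]. Then there exist constants C > 0 and R > e such that for every p ∈ ℂ ∖ (−∞,0] with |p| ≥ R one has |K(p) − μ(1)/Log p| ≤ C (log|p|)^{−2}, where Log is the principal branch of the logarithm; that is, K(p) = μ(1)/Log p + O((log|p|)^{−2}) as |p| → ∞ in ℂ ∖ (−∞,0]. -/
open MeasureTheory Filter Set

theorem ContDiffOn.exists_lipschitzOnWith_of_isCompact {E F : Type*}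
    [NormedAddCommGroup E] [NormedSpace ℝ E] [NormedAddCommGroup F] [NormedSpace ℝ F]
    {f : E → F} {s : Set E} (hf : ContDiffOn ℝ 1 f s) (hs : UniqueDiffOn ℝ s)
    (hconv : Convex ℝ s) (hcpt : IsCompact s) : ∃ K, LipschitzOnWith K f s := by
  obtain ⟨M, hM⟩ := hcpt.exists_bound_of_continuousOn (hf.continuousOn_fderivWithin hs le_rfl)
  refine ⟨M.toNNReal, hconv.lipschitzOnWith_of_nnnorm_fderivWithin_le
    (hf.differentiableOn one_ne_zero) fun x hx => ?_⟩
  rw [← NNReal.coe_le_coe, coe_nnnorm]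
  exact (hM x hx).trans (Real.le_coe_toNNReal M)

namespace Complex

theorem integral_exp_mul_sub_one {L : ℂ} (hL : L ≠ 0) :
    ∫ α in (0:ℝ)..1, exp (((α : ℂ) - 1) * L) = (1 - exp (-L)) / L := by
  have := intervalIntegral.integral_comp_sub_right (fun x : ℝ => exp (L * x)) 1 (a := 0) (b := 1)
  simp only [ofReal_sub, ofReal_one] at this
  simp_rw [mul_comm _ L, this, integral_exp_mul_complex hL]
  norm_num

theorem norm_exp_neg_div_le {L : ℂ} (hL : 0 < L.re) : ‖exp (-L) / L‖ ≤ 1 / L.re ^ 2 := by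
  have hre : L.re ≤ ‖L‖ := re_le_norm L
  have hexp : L.re ≤ Real.exp L.re := by linarith [Real.add_one_le_exp L.re]
  rw [norm_div, norm_exp, neg_re, Real.exp_neg]
  calc (Real.exp L.re)⁻¹ / ‖L‖ ≤ (L.re)⁻¹ / L.re := by gcongr
    _ = 1 / L.re ^ 2 := by field_simp

end Complex

theorem integral_one_sub_mul_exp_le {c : ℝ} (hc : 0 < c) :
    ∫ α in (0:ℝ)..1, (1 - α) * Real.exp ((α - 1) * c) ≤ 1 / c ^ 2 := by
  have hderiv : ∀ α ∈ uIcc (0:ℝ) 1,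
      HasDerivAt (fun α => ((1 - α) / c + 1 / c ^ 2) * Real.exp ((α - 1) * c))
        ((1 - α) * Real.exp ((α - 1) * c)) α := by
    intro α _
    have h := ((((hasDerivAt_id α).const_sub 1).div_const c).add_const (1 / c ^ 2)).mul
      (((hasDerivAt_id α).sub_const 1).mul_const c).exp
    refine h.congr_deriv ?_
    simp only [id]
    field_simp
    ring
  rw [intervalIntegral.integral_eq_sub_of_hasDerivAt hderiv
    (Continuous.intervalIntegrable (by fun_prop) 0 1)]
  norm_num
  positivity

theorem norm_integral_exp_mul_le {f : ℝ → ℂ} {M : ℝ} (hf : ∀ α ∈ Icc (0:ℝ) 1, ‖f α‖ ≤ M * (1 - α))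
    {L : ℂ} (hL : 0 < L.re) :
    ‖∫ α in (0:ℝ)..1, Complex.exp (((α : ℂ) - 1) * L) * f α‖ ≤ M / L.re ^ 2 := by
  have hM : 0 ≤ M := by simpa using (norm_nonneg _).trans (hf 0 (left_mem_Icc.2 zero_le_one))
  have hpointwise : ∀ α ∈ Ioc (0:ℝ) 1, ‖Complex.exp (((α : ℂ) - 1) * L) * f α‖ ≤
      M * ((1 - α) * Real.exp ((α - 1) * L.re)) := by
    intro α hα
    rw [norm_mul, Complex.norm_exp]
    have hre : (((α : ℂ) - 1) * L).re = (α - 1) * L.re := by simp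
    rw [hre]
    nlinarith [hf α (Ioc_subset_Icc_self hα), Real.exp_pos ((α - 1) * L.re)]
  calc ‖∫ α in (0:ℝ)..1, Complex.exp (((α : ℂ) - 1) * L) * f α‖
      ≤ ∫ α in (0:ℝ)..1, M * ((1 - α) * Real.exp ((α - 1) * L.re)) :=
        intervalIntegral.norm_integral_le_of_norm_le zero_le_one
          (ae_of_all _ hpointwise) (Continuous.intervalIntegrable (by fun_prop) 0 1)
    _ ≤ M * (1 / L.re ^ 2) := by
        rw [intervalIntegral.integral_const_mul]
        exact mul_le_mul_of_nonneg_left (integral_one_sub_mul_exp_le hL) hM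
    _ = M / L.re ^ 2 := mul_one_div M _

theorem integral_exp_mul_sub_div_eq {μ : ℝ → ℝ} (hμ : ContinuousOn μ (Icc 0 1)) {L : ℂ}
    (hL : L ≠ 0) :
    (∫ α in (0:ℝ)..1, Complex.exp (((α : ℂ) - 1) * L) * μ α) - μ 1 / L =
      (∫ α in (0:ℝ)..1, Complex.exp (((α : ℂ) - 1) * L) * ((μ α : ℂ) - μ 1))
        - μ 1 * (Complex.exp (-L) / L) := by
  have hexp : Continuous fun α : ℝ => Complex.exp (((α : ℂ) - 1) * L) := by fun_prop
  have hμ' : IntervalIntegrable (fun α => Complex.exp (((α : ℂ) - 1) * L) * μ α) volume 0 1 := by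
    refine ContinuousOn.intervalIntegrable ?_
    rw [uIcc_of_le zero_le_one]
    exact hexp.continuousOn.mul (Complex.continuous_ofReal.comp_continuousOn hμ)
  have hconst : IntervalIntegrable (fun α => Complex.exp (((α : ℂ) - 1) * L) * μ 1) volume 0 1 :=
    (hexp.mul continuous_const).intervalIntegrable 0 1
  simp_rw [mul_sub]
  rw [intervalIntegral.integral_sub hμ' hconst,
    intervalIntegral.integral_mul_const, Complex.integral_exp_mul_sub_one hL]
  ring

theorem norm_integral_exp_mul_sub_div_le {μ : ℝ → ℝ} {K : NNReal}
    (hμ : LipschitzOnWith K μ (Icc 0 1)) {L : ℂ} (hL : 0 < L.re) :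
    ‖(∫ α in (0:ℝ)..1, Complex.exp (((α : ℂ) - 1) * L) * μ α) - μ 1 / L‖
      ≤ (K + |μ 1|) / L.re ^ 2 := by
  have hL0 : L ≠ 0 := fun h => by simp [h] at hL
  have hlip : ∀ α ∈ Icc (0:ℝ) 1, ‖(μ α : ℂ) - μ 1‖ ≤ K * (1 - α) := fun α hα => by
    have hdist : dist α 1 = 1 - α := by
      rw [Real.dist_eq, abs_of_nonpos (by linarith [hα.2]), neg_sub]
    rw [← Complex.ofReal_sub, Complex.norm_real, ← dist_eq_norm, ← hdist]
    exact hμ.dist_le_mul α hα 1 (right_mem_Icc.2 zero_le_one)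
  rw [integral_exp_mul_sub_div_eq hμ.continuousOn hL0, add_div]
  refine (norm_sub_le _ _).trans (add_le_add (norm_integral_exp_mul_le hlip hL) ?_)
  rw [norm_mul, Complex.norm_real, Real.norm_eq_abs, div_eq_mul_one_div |μ 1|]
  exact mul_le_mul_of_nonneg_left (Complex.norm_exp_neg_div_le hL) (abs_nonneg _)

theorem Kfun_asymp_infty (μ : ℝ → ℝ)
    (hC2 : ContDiffOn ℝ 2 μ (Set.Icc 0 1)) :
    ∃ C > (0:ℝ), ∃ R > Real.exp 1, ∀ p : ℂ, p ∈ Complex.slitPlane →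
      R ≤ ‖p‖ →
      ‖Kfun μ p - (μ 1 : ℂ) / Complex.log p‖
        ≤ C / (Real.log ‖p‖) ^ 2 := by
  obtain ⟨K, hK⟩ := (hC2.of_le (by norm_num)).exists_lipschitzOnWith_of_isCompact
    (uniqueDiffOn_Icc zero_lt_one) (convex_Icc 0 1) isCompact_Icc
  refine ⟨K + |μ 1| + 1, by positivity, Real.exp 2, Real.exp_lt_exp.2 one_lt_two, ?_⟩
  intro p _ hR
  have hlog : 0 < (Complex.log p).re := by
    rw [Complex.log_re]
    exact Real.log_pos ((Real.one_lt_exp_iff.2 two_pos).trans_le hR)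
  calc ‖Kfun μ p - (μ 1 : ℂ) / Complex.log p‖ ≤ (K + |μ 1|) / (Complex.log p).re ^ 2 :=
        norm_integral_exp_mul_sub_div_le hK hlog
    _ ≤ (K + |μ 1| + 1) / Real.log ‖p‖ ^ 2 := by
        rw [Complex.log_re]
        gcongr ?_ / _
        linarith
end

section
/- Let μ be three times continuously differentiable on [0,1]. Then there exist constants C > 0 and R > e such that for every p ∈ ℂ ∖ (−∞,0] with |p| ≥ R one has |K(p) − μ(1)/Log p + μ′(1)/(Log p)²| ≤ C (log|p|)^{−3}, where Log is the principal branch of the logarithm; that is, K(p) = μ(1)/Log p − μ′(1)/(Log p)² + O((log|p|)^{−3}) as |p| → ∞ in ℂ ∖ (−∞,0]. -/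
open MeasureTheory Filter Set

theorem integral_exp_sub_one_mul {x : ℝ} (hx : x ≠ 0) :
    ∫ α in (0:ℝ)..1, Real.exp ((α - 1) * x) = (1 - Real.exp (-x)) / x := by
  have hderiv (α : ℝ) : HasDerivAt (fun α : ℝ => Real.exp ((α - 1) * x) / x)
      (Real.exp ((α - 1) * x)) α := by
    refine ((((hasDerivAt_id α).sub_const 1).mul_const x).exp.div_const x).congr_deriv ?_
    simp [hx]
  rw [intervalIntegral.integral_eq_sub_of_hasDerivAt (fun α _ => hderiv α)
    ((by fun_prop : Continuous fun α : ℝ => Real.exp ((α - 1) * x)).intervalIntegrable _ _)]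
  simp [sub_div]

theorem exp_neg_le_six_div_pow_three {x : ℝ} (hx : 0 < x) : Real.exp (-x) ≤ 6 / x ^ 3 := by
  have := Real.pow_div_factorial_le_exp x hx.le 3
  rw [Real.exp_neg, inv_le_comm₀ (Real.exp_pos x) (by positivity), inv_div]
  simpa [Nat.factorial] using this

section ExpKernel

open Complex

theorem hasDerivAt_cexp_sub_one_mul (L : ℂ) (α : ℝ) :
    HasDerivAt (fun α : ℝ => cexp ((α - 1) * L)) (cexp ((α - 1) * L) * L) α := by
  have : HasDerivAt (fun α : ℝ => ((α : ℂ) - 1) * L) L α := by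
    simpa using ((hasDerivAt_id α).ofReal_comp.sub_const 1).mul_const L
  exact this.cexp

theorem mul_integral_cexp_sub_one_mul (L : ℂ) {f f' : ℝ → ℂ}
    (hf : ∀ α ∈ Icc (0:ℝ) 1, HasDerivWithinAt f (f' α) (Icc 0 1) α)
    (hf' : ContinuousOn f' (Icc 0 1)) :
    L * ∫ α in (0:ℝ)..1, cexp ((α - 1) * L) * f α
      = f 1 - cexp (-L) * f 0 - ∫ α in (0:ℝ)..1, cexp ((α - 1) * L) * f' α := by
  have hparts := intervalIntegral.integral_mul_deriv_eq_deriv_mul_of_hasDerivWithinAt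
    (by rwa [uIcc_of_le zero_le_one])
    (fun α _ => (hasDerivAt_cexp_sub_one_mul L α).hasDerivWithinAt)
    (hf'.intervalIntegrable_of_Icc zero_le_one)
    ((by fun_prop : Continuous fun α : ℝ => cexp ((α - 1) * L) * L).intervalIntegrable 0 1)
  simp only [ofReal_one, sub_self, zero_mul, exp_zero, mul_one, ofReal_zero, zero_sub,
    neg_one_mul] at hparts
  rw [← intervalIntegral.integral_const_mul]
  simp_rw [mul_comm (f' _), mul_comm (f 0)] at hparts
  rw [← hparts]
  congr 1 with α
  ring

theorem norm_integral_cexp_sub_one_mul_le (L : ℂ) {h : ℝ → ℂ} {M : ℝ} (hL : 0 < L.re)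
    (hM : ∀ α ∈ Icc (0:ℝ) 1, ‖h α‖ ≤ M) :
    ‖∫ α in (0:ℝ)..1, cexp ((α - 1) * L) * h α‖ ≤ M / L.re := by
  have hM0 : 0 ≤ M := (norm_nonneg _).trans (hM 1 (right_mem_Icc.2 zero_le_one))
  have hpointwise : ∀ α ∈ Ioc (0:ℝ) 1,
      ‖cexp ((α - 1) * L) * h α‖ ≤ Real.exp ((α - 1) * L.re) * M := by
    intro α hα
    rw [norm_mul, norm_exp, ← ofReal_one, ← ofReal_sub, re_ofReal_mul]
    exact mul_le_mul_of_nonneg_left (hM α (Ioc_subset_Icc_self hα)) (Real.exp_pos _).le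
  calc ‖∫ α in (0:ℝ)..1, cexp ((α - 1) * L) * h α‖
      ≤ ∫ α in (0:ℝ)..1, Real.exp ((α - 1) * L.re) * M :=
        intervalIntegral.norm_integral_le_of_norm_le zero_le_one
          (Eventually.of_forall hpointwise)
          ((by fun_prop : Continuous fun α : ℝ => Real.exp ((α - 1) * L.re) * M).intervalIntegrable
            0 1)
    _ = (1 - Real.exp (-L.re)) / L.re * M := by
        rw [intervalIntegral.integral_mul_const, integral_exp_sub_one_mul hL.ne']
    _ ≤ M / L.re := by
        rw [div_mul_eq_mul_div, div_le_div_iff_of_pos_right hL]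
        nlinarith [Real.exp_pos (-L.re)]

theorem integral_cexp_sub_one_mul_sub_expansion (L : ℂ) {f f' f'' : ℝ → ℂ}
    (hf : ∀ α ∈ Icc (0:ℝ) 1, HasDerivWithinAt f (f' α) (Icc 0 1) α)
    (hf' : ∀ α ∈ Icc (0:ℝ) 1, HasDerivWithinAt f' (f'' α) (Icc 0 1) α)
    (hf'' : ContinuousOn f'' (Icc 0 1)) (hL : L ≠ 0) :
    (∫ α in (0:ℝ)..1, cexp ((α - 1) * L) * f α) - f 1 / L + f' 1 / L ^ 2
      = (cexp (-L) * (f' 0 - L * f 0) + ∫ α in (0:ℝ)..1, cexp ((α - 1) * L) * f'' α) / L ^ 2 := by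
  have hf'c : ContinuousOn f' (Icc 0 1) := fun α hα => (hf' α hα).continuousWithinAt
  have h1 := mul_integral_cexp_sub_one_mul L hf hf'c
  have h2 := mul_integral_cexp_sub_one_mul L hf' hf''
  generalize ∫ α in (0:ℝ)..1, cexp ((α - 1) * L) * f α = I at h1 ⊢
  generalize ∫ α in (0:ℝ)..1, cexp ((α - 1) * L) * f' α = I' at h1 h2
  generalize ∫ α in (0:ℝ)..1, cexp ((α - 1) * L) * f'' α = I'' at h2 ⊢
  field_simp
  linear_combination L * h1 - h2

theorem exists_norm_integral_cexp_sub_one_mul_sub_expansion_le {f f' f'' : ℝ → ℂ}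
    (hf : ∀ α ∈ Icc (0:ℝ) 1, HasDerivWithinAt f (f' α) (Icc 0 1) α)
    (hf' : ∀ α ∈ Icc (0:ℝ) 1, HasDerivWithinAt f' (f'' α) (Icc 0 1) α)
    (hf'' : ContinuousOn f'' (Icc 0 1)) :
    ∃ C, ∀ L : ℂ, 1 ≤ L.re →
      ‖(∫ α in (0:ℝ)..1, cexp ((α - 1) * L) * f α) - f 1 / L + f' 1 / L ^ 2‖
        ≤ C / L.re ^ 3 := by
  obtain ⟨M, hM⟩ := isCompact_Icc.exists_bound_of_continuousOn hf''
  have hM0 : 0 ≤ M := (norm_nonneg _).trans (hM 0 (left_mem_Icc.2 zero_le_one))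
  refine ⟨6 * (‖f' 0‖ + ‖f 0‖) + M, fun L hL => ?_⟩
  set x := L.re
  have hx : 0 < x := by linarith
  have hLx : x ≤ ‖L‖ := (le_abs_self _).trans (abs_re_le_norm L)
  have hL1 : 1 ≤ ‖L‖ := hL.trans hLx
  have hboundary : ‖cexp (-L) * (f' 0 - L * f 0)‖
      ≤ 6 * (‖f' 0‖ + ‖f 0‖) * ‖L‖ ^ 2 / x ^ 3 := by
    calc ‖cexp (-L) * (f' 0 - L * f 0)‖ ≤ Real.exp (-x) * (‖f' 0‖ + ‖L‖ * ‖f 0‖) := by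
          rw [norm_mul, norm_exp, neg_re, ← norm_mul]
          gcongr
          exact norm_sub_le _ _
      _ ≤ 6 / x ^ 3 * ((‖f' 0‖ + ‖f 0‖) * ‖L‖ ^ 2) := by
          gcongr
          · exact exp_neg_le_six_div_pow_three hx
          · nlinarith [mul_nonneg (norm_nonneg (f' 0)) (mul_nonneg (sub_nonneg.2 hL1)
              (by positivity : (0:ℝ) ≤ ‖L‖ + 1)),
              mul_nonneg (norm_nonneg (f 0)) (mul_nonneg (norm_nonneg L) (sub_nonneg.2 hL1))]
      _ = 6 * (‖f' 0‖ + ‖f 0‖) * ‖L‖ ^ 2 / x ^ 3 := by ring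
  have hremainder : ‖∫ α in (0:ℝ)..1, cexp ((α - 1) * L) * f'' α‖ ≤ M * ‖L‖ ^ 2 / x ^ 3 := by
    calc ‖∫ α in (0:ℝ)..1, cexp ((α - 1) * L) * f'' α‖ ≤ M / x :=
          norm_integral_cexp_sub_one_mul_le L hx hM
      _ = M * x ^ 2 / x ^ 3 := by field_simp
      _ ≤ M * ‖L‖ ^ 2 / x ^ 3 := by gcongr
  rw [integral_cexp_sub_one_mul_sub_expansion L hf hf' hf'' (norm_pos_iff.1 (by linarith)),
    norm_div, norm_pow, div_le_iff₀ (by positivity)]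
  calc ‖cexp (-L) * (f' 0 - L * f 0) + ∫ α in (0:ℝ)..1, cexp ((α - 1) * L) * f'' α‖
      ≤ 6 * (‖f' 0‖ + ‖f 0‖) * ‖L‖ ^ 2 / x ^ 3 + M * ‖L‖ ^ 2 / x ^ 3 :=
        (norm_add_le _ _).trans (add_le_add hboundary hremainder)
    _ = (6 * (‖f' 0‖ + ‖f 0‖) + M) / x ^ 3 * ‖L‖ ^ 2 := by ring

end ExpKernel

theorem Kfun_asymp_infty_second_order (μ : ℝ → ℝ)
    (hC3 : ContDiffOn ℝ 3 μ (Set.Icc 0 1)) :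
    ∃ C > (0:ℝ), ∃ R > Real.exp 1, ∀ p : ℂ, p ∈ Complex.slitPlane →
      R ≤ ‖p‖ →
      ‖Kfun μ p - (μ 1 : ℂ) / Complex.log p
          + ((derivWithin μ (Set.Icc (0:ℝ) 1) 1 : ℝ) : ℂ) / (Complex.log p) ^ 2‖
        ≤ C / (Real.log ‖p‖) ^ 3 := by
  set μ' := derivWithin μ (Icc 0 1)
  have hμ' : ContDiffOn ℝ 2 μ' (Icc 0 1) := hC3.derivWithin (uniqueDiffOn_Icc zero_lt_one) le_rfl
  obtain ⟨C, hC⟩ := exists_norm_integral_cexp_sub_one_mul_sub_expansion_le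
    (f := fun α => (μ α : ℂ)) (f' := fun α => (μ' α : ℂ))
    (fun α hα => ((hC3.differentiableOn (by norm_num) α hα).hasDerivWithinAt).ofReal_comp)
    (fun α hα => ((hμ'.differentiableOn (by norm_num) α hα).hasDerivWithinAt).ofReal_comp)
    (Complex.continuous_ofReal.comp_continuousOn (hμ'.continuousOn_derivWithin
      (uniqueDiffOn_Icc zero_lt_one) (by norm_num)))
  refine ⟨max C 1, by positivity, Real.exp 2, Real.exp_lt_exp.2 one_lt_two, fun p _ hp => ?_⟩
  have hre : (Complex.log p).re = Real.log ‖p‖ := Complex.log_re p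
  have hlog : 1 ≤ Real.log ‖p‖ := (Real.le_log_iff_exp_le ((Real.exp_pos 2).trans_le hp)).2
    ((Real.exp_le_exp.2 one_le_two).trans hp)
  calc _ ≤ C / (Real.log ‖p‖) ^ 3 := hre ▸ hC (Complex.log p) (hre ▸ hlog)
    _ ≤ max C 1 / (Real.log ‖p‖) ^ 3 := by gcongr; exact le_max_left C 1
end

section
/- Let μ be continuous on [0,1] with μ(0) ≠ 0. Then K(p) ∼ p^{−1}(log(1/p))^{−1} μ(0) as p → 0 within ℂ ∖ (−∞,0]; more precisely, p · (−Log p) · K(p) → μ(0) as p → 0, p ∈ ℂ ∖ (−∞,0], where Log is the principal branch of the logarithm. -/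
open MeasureTheory Filter Set

/-!
Substituting `L = Log p` turns `p K(p)` into `∫₀¹ e^{αL} μ(α) dα`, and as `p → 0` we get
`Re L → -∞` with `|Im L| ≤ π`, so that eventually `|L| ≤ 2 |Re L|`. The constant part `μ(0)` integrates to
exactly `μ(0) (1 - e^L) / (-L)`, so it remains to see that `s ∫₀¹ e^{-sα} |μ(α) - μ(0)| dα → 0` as
`s → ∞`: near `0` the integrand is small by continuity, while away from `0` the weight `s e^{-sα}`
decays exponentially.
-/

open Topology Complex

theorem tendsto_mul_integral_exp_neg_mul_norm {E : Type*} [NormedAddCommGroup E] {g : ℝ → E}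
    (hg : ContinuousOn g (Icc 0 1)) (hg0 : g 0 = 0) :
    Tendsto (fun s : ℝ => s * ∫ α in (0:ℝ)..1, Real.exp (-(s * α)) * ‖g α‖) atTop (𝓝 0) := by
  obtain ⟨M, hM⟩ := isCompact_Icc.exists_bound_of_continuousOn hg
  have hM0 : 0 ≤ M := (norm_nonneg _).trans (hM 0 ⟨le_rfl, zero_le_one⟩)
  rw [Metric.tendsto_nhds]
  intro ε hε
  obtain ⟨d, hd, hgd⟩ :=
    Metric.continuousWithinAt_iff.mp (hg 0 ⟨le_rfl, zero_le_one⟩) (ε / 2) (half_pos hε)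
  have htail : ∀ᶠ s in atTop, M * (s * Real.exp (-(s * d))) < ε / 2 := by
    have := (tendsto_rpow_mul_exp_neg_mul_atTop_nhds_zero 1 d hd).const_mul M
    simp only [Real.rpow_one, mul_zero, neg_mul, mul_comm d] at this
    exact this.eventually_lt_const (half_pos hε)
  filter_upwards [htail, eventually_gt_atTop 0] with s htail hs
  have hpoint : ∀ α ∈ Icc (0:ℝ) 1,
      Real.exp (-(s * α)) * ‖g α‖ ≤ ε / 2 * Real.exp (-(s * α)) + M * Real.exp (-(s * d)) := by
    intro α hα
    rcases lt_or_ge α d with hαd | hdα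
    · have hgα : ‖g α‖ < ε / 2 := by
        simpa [hg0, abs_of_nonneg hα.1, hαd] using hgd hα
      nlinarith [Real.exp_pos (-(s * α)), Real.exp_pos (-(s * d))]
    · have : Real.exp (-(s * α)) ≤ Real.exp (-(s * d)) := by
        gcongr
      nlinarith [Real.exp_pos (-(s * α)), hM α hα, norm_nonneg (g α)]
  have hexp : ∫ α in (0:ℝ)..1, Real.exp (-(s * α)) ≤ 1 / s := by
    simpa using intervalIntegral_pow_mul_exp_neg_le (k := 0) zero_le_one hs
  have hint : ∫ α in (0:ℝ)..1, Real.exp (-(s * α)) * ‖g α‖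
      ≤ ε / 2 * (∫ α in (0:ℝ)..1, Real.exp (-(s * α))) + M * Real.exp (-(s * d)) := by
    have hcont : Continuous fun α : ℝ => Real.exp (-(s * α)) := by fun_prop
    calc _ ≤ ∫ α in (0:ℝ)..1, (ε / 2 * Real.exp (-(s * α)) + M * Real.exp (-(s * d))) :=
          intervalIntegral.integral_mono_on zero_le_one
            ((hcont.intervalIntegrable 0 1).mul_continuousOn
              (hg.norm.mono (by rw [uIcc_of_le zero_le_one])))
            (((hcont.const_mul _).add continuous_const).intervalIntegrable 0 1) hpoint
      _ = _ := by
          rw [intervalIntegral.integral_add ((hcont.const_mul _).intervalIntegrable 0 1)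
            intervalIntegrable_const, intervalIntegral.integral_const_mul]
          simp
  have hnonneg : 0 ≤ ∫ α in (0:ℝ)..1, Real.exp (-(s * α)) * ‖g α‖ :=
    intervalIntegral.integral_nonneg zero_le_one fun _ _ => by positivity
  rw [Real.dist_0_eq_abs, abs_of_nonneg (by positivity)]
  calc s * ∫ α in (0:ℝ)..1, Real.exp (-(s * α)) * ‖g α‖
      ≤ s * (ε / 2 * (1 / s) + M * Real.exp (-(s * d))) := by
          gcongr
          linarith [mul_le_mul_of_nonneg_left hexp (half_pos hε).le, hint]
    _ = ε / 2 + M * (s * Real.exp (-(s * d))) := by field_simp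
    _ < ε := by linarith

theorem neg_mul_integral_cexp_mul {L : ℂ} (hL : L ≠ 0) :
    -L * ∫ α in (0:ℝ)..1, cexp (α * L) = 1 - cexp L := by
  simp_rw [mul_comm _ L]
  rw [integral_exp_mul_complex hL]
  field_simp
  simp

theorem norm_neg_mul_integral_cexp_mul_sub_le {f : ℝ → ℂ} (hf : ContinuousOn f (Icc 0 1))
    {L : ℂ} (hL : L ≠ 0) :
    ‖-L * (∫ α in (0:ℝ)..1, cexp (α * L) * f α) - f 0‖
      ≤ ‖L‖ * (∫ α in (0:ℝ)..1, Real.exp (L.re * α) * ‖f α - f 0‖)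
        + ‖f 0‖ * Real.exp L.re := by
  have hcont : Continuous fun α : ℝ => cexp (α * L) := by fun_prop
  have hf' : ContinuousOn f (uIcc 0 1) := by rwa [uIcc_of_le zero_le_one]
  have hsplit : -L * (∫ α in (0:ℝ)..1, cexp (α * L) * f α) - f 0
      = -L * (∫ α in (0:ℝ)..1, cexp (α * L) * (f α - f 0)) - f 0 * cexp L := by
    have hsub : ∫ α in (0:ℝ)..1, cexp (α * L) * (f α - f 0)
        = (∫ α in (0:ℝ)..1, cexp (α * L) * f α) - (∫ α in (0:ℝ)..1, cexp (α * L)) * f 0 := by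
      simp_rw [mul_sub]
      rw [intervalIntegral.integral_sub ((hcont.intervalIntegrable 0 1).mul_continuousOn hf')
        ((hcont.intervalIntegrable 0 1).mul_const (f 0)), intervalIntegral.integral_mul_const]
    rw [hsub]
    linear_combination f 0 * neg_mul_integral_cexp_mul hL
  have hnorm : ‖∫ α in (0:ℝ)..1, cexp (α * L) * (f α - f 0)‖
      ≤ ∫ α in (0:ℝ)..1, Real.exp (L.re * α) * ‖f α - f 0‖ := by
    refine (intervalIntegral.norm_integral_le_integral_norm zero_le_one).trans_eq ?_
    congr 1 with α
    rw [norm_mul, Complex.norm_exp]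
    simp [mul_comm]
  rw [hsplit]
  calc _ ≤ ‖-L * (∫ α in (0:ℝ)..1, cexp (α * L) * (f α - f 0))‖ + ‖f 0 * cexp L‖ :=
        norm_sub_le _ _
    _ ≤ _ := by
        rw [norm_mul, norm_neg, norm_mul, Complex.norm_exp]
        gcongr

def reAtBotStrip (c : ℝ) : Filter ℂ := comap re atBot ⊓ 𝓟 {L | |L.im| ≤ c}

theorem tendsto_re_reAtBotStrip (c : ℝ) : Tendsto re (reAtBotStrip c) atBot :=
  tendsto_comap.mono_left inf_le_left

theorem eventually_abs_im_le_reAtBotStrip (c : ℝ) : ∀ᶠ L in reAtBotStrip c, |L.im| ≤ c :=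
  mem_inf_of_right (mem_principal_self _)

theorem tendsto_neg_mul_integral_cexp_mul {f : ℝ → ℂ} (hf : ContinuousOn f (Icc 0 1)) (c : ℝ) :
    Tendsto (fun L : ℂ => -L * ∫ α in (0:ℝ)..1, cexp (α * L) * f α) (reAtBotStrip c)
      (𝓝 (f 0)) := by
  have hre := tendsto_re_reAtBotStrip c
  have hbound : Tendsto (fun L : ℂ => 2 * (-L.re *
        ∫ α in (0:ℝ)..1, Real.exp (L.re * α) * ‖f α - f 0‖) + ‖f 0‖ * Real.exp L.re)
      (reAtBotStrip c) (𝓝 0) := by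
    have hlap := tendsto_mul_integral_exp_neg_mul_norm (hf.sub continuousOn_const) (sub_self _)
    convert (((hlap.comp tendsto_neg_atBot_atTop).const_mul 2).add
      (Real.tendsto_exp_atBot.const_mul ‖f 0‖)).comp hre using 2
    · simp only [Function.comp_apply, Pi.sub_apply, neg_mul, neg_neg]
    · simp
  rw [tendsto_iff_norm_sub_tendsto_zero]
  refine squeeze_zero' (.of_forall fun _ => norm_nonneg _) ?_ hbound
  filter_upwards [eventually_abs_im_le_reAtBotStrip c, hre.eventually (eventually_le_atBot (-|c|)),
    hre.eventually (eventually_lt_atBot 0)] with L hLim hLc hL0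
  have hL : ‖L‖ ≤ 2 * -L.re := by
    have := Complex.norm_le_abs_re_add_abs_im L
    rw [abs_of_neg hL0] at this
    linarith [le_abs_self c]
  refine (norm_neg_mul_integral_cexp_mul_sub_le hf (fun h => by simp [h] at hL0)).trans ?_
  rw [← mul_assoc]
  gcongr
  exact intervalIntegral.integral_nonneg zero_le_one fun _ _ => by positivity

theorem tendsto_log_nhdsNE_zero_reAtBotStrip :
    Tendsto log (𝓝[≠] 0) (reAtBotStrip Real.pi) := by
  refine tendsto_inf.2 ⟨tendsto_comap_iff.2 ?_, tendsto_principal.2 (.of_forall fun p => ?_)⟩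
  · simpa [Function.comp_def, log_re] using
      Real.tendsto_log_nhdsGT_zero.comp tendsto_norm_nhdsNE_zero
  · exact abs_le.2 ⟨(neg_pi_lt_log_im p).le, log_im_le_pi p⟩

theorem mul_Kfun (μ : ℝ → ℝ) {p : ℂ} (hp : p ≠ 0) :
    p * Kfun μ p = ∫ α in (0:ℝ)..1, cexp (α * log p) * μ α := by
  rw [Kfun, ← intervalIntegral.integral_const_mul]
  congr 1 with α
  rw [← mul_assoc, ← exp_log hp, ← Complex.exp_add, exp_log hp]
  ring_nf

theorem Kfun_asymp_zero_general (μ : ℝ → ℝ)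
    (hc : ContinuousOn μ (Set.Icc 0 1)) :
    Tendsto (fun p : ℂ => p * (-Complex.log p) * Kfun μ p)
      (nhdsWithin 0 Complex.slitPlane) (nhds ((μ 0 : ℂ))) := by
  have hμ : ContinuousOn (fun α => (μ α : ℂ)) (Icc 0 1) := continuous_ofReal.comp_continuousOn hc
  have hlog : Tendsto log (𝓝[slitPlane] 0) (reAtBotStrip Real.pi) :=
    tendsto_log_nhdsNE_zero_reAtBotStrip.mono_left
      (nhdsWithin_mono _ fun _ => slitPlane_ne_zero)
  refine ((tendsto_neg_mul_integral_cexp_mul hμ Real.pi).comp hlog).congr' ?_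
  filter_upwards [self_mem_nhdsWithin] with p hp
  rw [Function.comp_apply, ← mul_Kfun μ (slitPlane_ne_zero hp)]
  ring

theorem Kfun_asymp_zero (μ : ℝ → ℝ)
    (hc : ContinuousOn μ (Set.Icc 0 1)) (h0 : μ 0 ≠ 0) :
    Tendsto (fun p : ℂ => p * (-Complex.log p) * Kfun μ p)
      (nhdsWithin 0 Complex.slitPlane) (nhds ((μ 0 : ℂ))) :=
  Kfun_asymp_zero_general μ hc
end

section
/- Let μ be continuous on [0,1] with μ(α) ∼ a α^λ as α → 0⁺ for some constants a > 0 and λ > 0 (i.e. μ(α)/(a α^λ) → 1). Then K(p) ∼ a Γ(1+λ) p^{−1} (log(1/p))^{−1−λ} as p → 0 within ℂ ∖ (−∞,0]; more precisely, p · (−Log p)^{1+λ} · K(p) → a Γ(1+λ) as p → 0, p ∈ ℂ ∖ (−∞,0], where Log is the principal branch of the logarithm and (−Log p)^{1+λ} is the principal power, which is well-defined since Re(−Log p) → +∞. -/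
open MeasureTheory Filter Set

/-!
Put `L = -Log p`, `s = Re L` and `w = L / s`. As `p → 0` in the slit plane, `s → ∞` while
`Im L = -arg p` stays bounded, so `w → 1`. Since `p · p^{α-1} = e^{-αL}`, the substitution
`α = t / s` gives `p L^{1+λ} K(p) = w^{1+λ} ∫₀^s e^{-tw} s^λ μ(t/s) dt`.
The integrand tends to `a t^λ e^{-t}` because `μ(α) ∼ a α^λ`, and it is dominated by
`C t^λ e^{-t}` because `|μ(α)| ≤ C α^λ` on `(0, 1]` (near `0` by the asymptotics, away from `0` by
continuity) and `Re w = 1`. Dominated convergence yields `a ∫₀^∞ t^λ e^{-t} dt = a Γ(1+λ)`.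
-/

open scoped Topology
open Asymptotics

theorem ofReal_mul_cpow_of_pos {r : ℝ} (hr : 0 < r) (z x : ℂ) :
    ((r : ℂ) * z) ^ x = (r : ℂ) ^ x * z ^ x := by
  rcases eq_or_ne z 0 with rfl | hz
  · rcases eq_or_ne x 0 with rfl | hx
    · simp
    · simp [Complex.zero_cpow hx]
  · have hr' : (r : ℂ) ≠ 0 := Complex.ofReal_ne_zero.2 hr.ne'
    rw [Complex.cpow_def_of_ne_zero (mul_ne_zero hr' hz), Complex.cpow_def_of_ne_zero hr',
      Complex.cpow_def_of_ne_zero hz, Complex.log_ofReal_mul hr hz, ← Complex.ofReal_log hr.le,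
      add_mul, Complex.exp_add]

theorem tendsto_neg_log_re_nhdsNE_zero :
    Tendsto (fun z : ℂ => (-Complex.log z).re) (𝓝[≠] 0) atTop := by
  simpa [Complex.log_re, Function.comp_def] using
    Real.tendsto_log_nhdsGT_zero.comp (tendsto_norm_nhdsNE_zero (E := ℂ))

theorem tendsto_div_re_of_isBoundedUnder_im {ι : Type*} {l : Filter ι} {z : ι → ℂ}
    (hre : Tendsto (fun i => (z i).re) l atTop)
    (him : IsBoundedUnder (· ≤ ·) l fun i => ‖(z i).im‖) :
    Tendsto (fun i => z i / (z i).re) l (𝓝 1) := by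
  have hratio : Tendsto (fun i => (z i).re⁻¹ * (z i).im) l (𝓝 0) :=
    hre.inv_tendsto_atTop.zero_mul_isBoundedUnder_le him
  have hlim := ((Complex.continuous_ofReal.tendsto 0).comp hratio).mul_const Complex.I
    |>.const_add 1
  rw [Complex.ofReal_zero, zero_mul, add_zero] at hlim
  refine hlim.congr' ?_
  filter_upwards [hre.eventually_gt_atTop 0] with i hi
  apply Complex.ext <;> simp [Complex.div_ofReal_re, Complex.div_ofReal_im, hi.ne', inv_mul_eq_div]

theorem mul_Kfun_eq (μ : ℝ → ℝ) {p : ℂ} (hp : p ≠ 0) :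
    p * Kfun μ p = ∫ α in (0:ℝ)..1, Complex.exp (-(α * -Complex.log p)) * (μ α : ℂ) := by
  rw [Kfun, ← intervalIntegral.integral_const_mul]
  refine intervalIntegral.integral_congr fun α _ => ?_
  rw [← mul_assoc]
  congr 1
  rw [show -((α : ℂ) * -Complex.log p) = Complex.log p + ((α : ℂ) - 1) * Complex.log p by ring,
    Complex.exp_add, Complex.exp_log hp]

-- The right-hand side lives on the fixed domain `Ioi 0`, ready for dominated convergence
-- as `s → ∞`.
theorem mul_cpow_mul_integral_exp_eq_integral_rescaled (μ : ℝ → ℝ) (lam : ℝ) {s : ℝ} (hs : 0 < s)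
    (w : ℂ) :
    ((s : ℂ) * w) ^ ((1 + lam : ℝ) : ℂ) *
        ∫ α in (0:ℝ)..1, Complex.exp (-(α * (s * w))) * (μ α : ℂ)
      = w ^ ((1 + lam : ℝ) : ℂ) * ∫ t in Ioi 0, (Ioc 0 s).indicator
          (fun t => Complex.exp (-(t * w)) * ((s ^ lam * μ (t / s) : ℝ) : ℂ)) t := by
  have hsubst : ∫ t in (0:ℝ)..s, Complex.exp (-(t * w)) * (μ (t / s) : ℂ)
      = s * ∫ α in (0:ℝ)..1, Complex.exp (-(α * (s * w))) * (μ α : ℂ) := by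
    have := intervalIntegral.integral_comp_div (a := 0) (b := s)
      (fun α : ℝ => Complex.exp (-(α * (s * w))) * (μ α : ℂ)) hs.ne'
    rw [zero_div, div_self hs.ne', Complex.real_smul] at this
    rw [← this]
    refine intervalIntegral.integral_congr fun t _ => ?_
    have hsC : (s : ℂ) ≠ 0 := Complex.ofReal_ne_zero.2 hs.ne'
    simp only [Complex.ofReal_div]
    field_simp
  have hIoi : ∫ t in Ioi 0, (Ioc 0 s).indicator
        (fun t => Complex.exp (-(t * w)) * ((s ^ lam * μ (t / s) : ℝ) : ℂ)) t
      = ((s ^ lam : ℝ) : ℂ) * ∫ t in (0:ℝ)..s, Complex.exp (-(t * w)) * (μ (t / s) : ℂ) := by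
    rw [setIntegral_indicator measurableSet_Ioc, inter_eq_right.2 Ioc_subset_Ioi_self,
      intervalIntegral.integral_of_le hs.le, ← integral_const_mul]
    congr 1 with t
    push_cast
    ring
  rw [ofReal_mul_cpow_of_pos hs, ← Complex.ofReal_cpow hs.le, Real.rpow_add hs, Real.rpow_one,
    hIoi, hsubst]
  push_cast
  ring

section

variable {μ : ℝ → ℝ} {a lam : ℝ}

theorem tendsto_div_rpow_of_tendsto_div_mul_rpow (ha : a ≠ 0)
    (h : Tendsto (fun α : ℝ => μ α / (a * α ^ lam)) (𝓝[>] 0) (𝓝 1)) :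
    Tendsto (fun α => μ α / α ^ lam) (𝓝[>] 0) (𝓝 a) := by
  have := h.const_mul a
  rw [mul_one] at this
  refine this.congr fun α => ?_
  rw [mul_div_assoc', mul_div_mul_left _ _ ha]

theorem exists_abs_le_mul_rpow (hc : ContinuousOn μ (Icc 0 1)) (hlam : 0 ≤ lam)
    (hμ : Tendsto (fun α => μ α / α ^ lam) (𝓝[>] 0) (𝓝 a)) :
    ∃ C, ∀ α ∈ Ioc (0:ℝ) 1, |μ α| ≤ C * α ^ lam := by
  have hO : μ =O[𝓝[>] 0] (· ^ lam) :=
    isBigO_of_div_tendsto_nhds (eventually_mem_nhdsWithin.mono fun α hα h0 =>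
      absurd h0 (Real.rpow_pos_of_pos hα lam).ne') a hμ
  obtain ⟨c, hc0⟩ := hO.bound
  obtain ⟨u, hu, hsub⟩ := mem_nhdsGT_iff_exists_Ioo_subset.1 hc0
  obtain ⟨M, hM⟩ := isCompact_Icc.exists_bound_of_continuousOn
    (hc.mono (Icc_subset_Icc_left (le_of_lt hu)))
  refine ⟨max c (M / u ^ lam), fun α hα => ?_⟩
  have hαlam : 0 ≤ α ^ lam := Real.rpow_nonneg hα.1.le lam
  rcases lt_or_ge α u with hαu | hαu
  · calc |μ α| ≤ c * α ^ lam := by simpa [abs_of_nonneg hαlam] using hsub ⟨hα.1, hαu⟩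
      _ ≤ _ := mul_le_mul_of_nonneg_right (le_max_left _ _) hαlam
  · have hMα : |μ α| ≤ M := hM α ⟨hαu, hα.2⟩
    calc |μ α| ≤ M := hMα
      _ ≤ M / u ^ lam * α ^ lam := by
          rw [div_mul_eq_mul_div, le_div_iff₀ (Real.rpow_pos_of_pos hu lam)]
          exact mul_le_mul_of_nonneg_left (Real.rpow_le_rpow (le_of_lt hu) hαu hlam)
            ((abs_nonneg _).trans hMα)
      _ ≤ _ := mul_le_mul_of_nonneg_right (le_max_right _ _) hαlam

theorem tendsto_rpow_mul_comp_div {ι : Type*} {l : Filter ι} {s : ι → ℝ}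
    (hμ : Tendsto (fun α => μ α / α ^ lam) (𝓝[>] 0) (𝓝 a)) (hs : Tendsto s l atTop)
    {t : ℝ} (ht : 0 < t) :
    Tendsto (fun i => s i ^ lam * μ (t / s i)) l (𝓝 (a * t ^ lam)) := by
  have hts : Tendsto (fun i => t / s i) l (𝓝[>] 0) :=
    tendsto_nhdsWithin_iff.2 ⟨tendsto_const_nhds.div_atTop hs,
      (hs.eventually_gt_atTop 0).mono fun i hi => div_pos ht hi⟩
  refine ((hμ.comp hts).mul_const (t ^ lam)).congr' ?_
  filter_upwards [hs.eventually_gt_atTop 0] with i hi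
  have : t ^ lam ≠ 0 := (Real.rpow_pos_of_pos ht lam).ne'
  have : s i ^ lam ≠ 0 := (Real.rpow_pos_of_pos hi lam).ne'
  simp only [Function.comp_apply]
  rw [Real.div_rpow ht.le hi.le]
  field_simp

theorem tendsto_exp_mul_rpow_mul_comp_div {ι : Type*} {l : Filter ι} {s : ι → ℝ} {w : ι → ℂ}
    (hμ : Tendsto (fun α => μ α / α ^ lam) (𝓝[>] 0) (𝓝 a)) (hs : Tendsto s l atTop)
    (hw : Tendsto w l (𝓝 1)) {t : ℝ} (ht : 0 < t) :
    Tendsto (fun i => (Ioc 0 (s i)).indicator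
        (fun t => Complex.exp (-(t * w i)) * ((s i ^ lam * μ (t / s i) : ℝ) : ℂ)) t) l
      (𝓝 ((a * t ^ lam * Real.exp (-t) : ℝ) : ℂ)) := by
  have hlim := ((Complex.continuous_exp.tendsto _).comp ((hw.const_mul (t : ℂ)).neg)).mul
    ((Complex.continuous_ofReal.tendsto _).comp (tendsto_rpow_mul_comp_div hμ hs ht))
  have hlim_eq : ((a * t ^ lam * Real.exp (-t) : ℝ) : ℂ)
      = Complex.exp (-((t : ℂ) * 1)) * ((a * t ^ lam : ℝ) : ℂ) := by
    rw [mul_one]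
    push_cast
    ring
  rw [hlim_eq]
  refine hlim.congr' ?_
  filter_upwards [hs.eventually_ge_atTop t] with i hti
  rw [indicator_of_mem (show t ∈ Ioc 0 (s i) from ⟨ht, hti⟩)]
  rfl

theorem norm_exp_mul_rpow_mul_comp_div_le {C : ℝ}
    (hC : ∀ α ∈ Ioc (0:ℝ) 1, |μ α| ≤ C * α ^ lam) {s : ℝ} (hs : 0 < s) {w : ℂ} (hw : w.re = 1)
    {t : ℝ} (ht : t ∈ Ioc 0 s) :
    ‖Complex.exp (-(t * w)) * ((s ^ lam * μ (t / s) : ℝ) : ℂ)‖ ≤ C * t ^ lam * Real.exp (-t) := by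
  have hexp : ‖Complex.exp (-(t * w))‖ = Real.exp (-t) := by
    simp [Complex.norm_exp, hw]
  rw [norm_mul, hexp, Complex.norm_real, Real.norm_eq_abs, abs_mul,
    abs_of_pos (Real.rpow_pos_of_pos hs lam), mul_comm (Real.exp (-t))]
  refine mul_le_mul_of_nonneg_right ?_ (Real.exp_pos _).le
  calc s ^ lam * |μ (t / s)| ≤ s ^ lam * (C * (t / s) ^ lam) := by
        gcongr
        exact hC _ ⟨div_pos ht.1 hs, (div_le_one hs).2 ht.2⟩
    _ = C * t ^ lam := by
        have : s ^ lam ≠ 0 := (Real.rpow_pos_of_pos hs lam).ne'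
        rw [Real.div_rpow ht.1.le hs.le]
        field_simp

theorem tendsto_integral_indicator_exp_mul_rescaled {ι : Type*} {l : Filter ι}
    [l.IsCountablyGenerated] {s : ι → ℝ} {w : ι → ℂ} {C : ℝ} (hc : ContinuousOn μ (Icc 0 1))
    (hlam : -1 < lam)
    (hμ : Tendsto (fun α => μ α / α ^ lam) (𝓝[>] 0) (𝓝 a))
    (hC : ∀ α ∈ Ioc (0:ℝ) 1, |μ α| ≤ C * α ^ lam)
    (hs : Tendsto s l atTop) (hw : Tendsto w l (𝓝 1)) (hw_re : ∀ᶠ i in l, (w i).re = 1) :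
    Tendsto (fun i => ∫ t in Ioi 0, (Ioc 0 (s i)).indicator
        (fun t => Complex.exp (-(t * w i)) * ((s i ^ lam * μ (t / s i) : ℝ) : ℂ)) t) l
      (𝓝 ((a * Real.Gamma (1 + lam) : ℝ) : ℂ)) := by
  have hGamma : ∫ t in Ioi (0:ℝ), ((a * t ^ lam * Real.exp (-t) : ℝ) : ℂ)
      = ((a * Real.Gamma (1 + lam) : ℝ) : ℂ) := by
    rw [integral_complex_ofReal, Real.Gamma_eq_integral (by linarith), ← integral_const_mul]
    congr 2 with t
    rw [add_sub_cancel_left]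
    ring
  have hC0 : 0 ≤ C := by simpa using (abs_nonneg _).trans (hC 1 ⟨one_pos, le_rfl⟩)
  rw [← hGamma]
  refine tendsto_integral_filter_of_dominated_convergence
    (fun t => C * t ^ lam * Real.exp (-t)) ?_ ?_ ?_ ?_
  · filter_upwards [hs.eventually_gt_atTop 0] with i hi
    have hμs : ContinuousOn (fun t => μ (t / s i)) (Ioc 0 (s i)) :=
      hc.comp (continuousOn_id.div_const _) fun t ht =>
        ⟨(div_pos ht.1 hi).le, (div_le_one hi).2 ht.2⟩
    refine ((aestronglyMeasurable_indicator_iff measurableSet_Ioc).2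
      (ContinuousOn.aestronglyMeasurable ?_ measurableSet_Ioc)).restrict
    exact (by fun_prop : Continuous fun t : ℝ => Complex.exp (-(t * w i))).continuousOn.mul
      (Complex.continuous_ofReal.comp_continuousOn (continuousOn_const.mul hμs))
  · filter_upwards [hs.eventually_gt_atTop 0, hw_re] with i hi hwi
    refine (ae_restrict_iff' measurableSet_Ioi).2 (Eventually.of_forall fun t ht => ?_)
    by_cases hts : t ∈ Ioc 0 (s i)
    · rw [indicator_of_mem hts]
      exact norm_exp_mul_rpow_mul_comp_div_le hC hi hwi hts
    · rw [indicator_of_notMem hts, norm_zero]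
      have : 0 < t := ht
      positivity
  · refine ((Real.GammaIntegral_convergent (by linarith : 0 < 1 + lam)).const_mul C).congr
      (Eventually.of_forall fun t => ?_)
    simp only [add_sub_cancel_left]
    ring
  · exact (ae_restrict_iff' measurableSet_Ioi).2 (Eventually.of_forall fun t ht =>
      tendsto_exp_mul_rpow_mul_comp_div hμ hs hw ht)

end

theorem Kfun_asymp_zero_power_weight (μ : ℝ → ℝ)
    (hc : ContinuousOn μ (Set.Icc 0 1))
    (a lam : ℝ) (ha : 0 < a) (hlam : 0 < lam)
    (hasymp : Tendsto (fun α : ℝ => μ α / (a * α ^ lam))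
      (nhdsWithin 0 (Set.Ioi 0)) (nhds 1)) :
    Tendsto (fun p : ℂ => p * (-Complex.log p) ^ ((1 + lam : ℝ) : ℂ) * Kfun μ p)
      (nhdsWithin 0 Complex.slitPlane)
      (nhds ((a * Real.Gamma (1 + lam) : ℝ) : ℂ)) := by
  have hμ := tendsto_div_rpow_of_tendsto_div_mul_rpow ha.ne' hasymp
  obtain ⟨C, hC⟩ := exists_abs_le_mul_rpow hc hlam.le hμ
  have hre : Tendsto (fun p : ℂ => (-Complex.log p).re) (𝓝[Complex.slitPlane] 0) atTop :=
    tendsto_neg_log_re_nhdsNE_zero.mono_left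
      (nhdsWithin_mono _ fun p hp => Complex.slitPlane_ne_zero hp)
  have hw := tendsto_div_re_of_isBoundedUnder_im hre
    (isBoundedUnder_of ⟨Real.pi, fun p => by simpa [Complex.log_im] using Complex.abs_arg_le_pi p⟩)
  have hw_re : ∀ᶠ p in 𝓝[Complex.slitPlane] 0,
      (-Complex.log p / ((-Complex.log p).re : ℂ)).re = 1 :=
    (hre.eventually_gt_atTop 0).mono fun p hp => by rw [Complex.div_ofReal_re, div_self hp.ne']
  have hpow : Tendsto (fun p => (-Complex.log p / ((-Complex.log p).re : ℂ)) ^ ((1 + lam : ℝ) : ℂ))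
      (𝓝[Complex.slitPlane] 0) (𝓝 1) := by
    simpa [Function.comp_def] using
      (continuousAt_cpow_const Complex.one_mem_slitPlane).tendsto.comp hw
  have hlim := hpow.mul
    (tendsto_integral_indicator_exp_mul_rescaled hc (by linarith) hμ hC hre hw hw_re)
  rw [one_mul] at hlim
  refine hlim.congr' ?_
  filter_upwards [hre.eventually_gt_atTop 0, self_mem_nhdsWithin] with p hs hp
  rw [← mul_cpow_mul_integral_exp_eq_integral_rescaled μ lam hs,
    mul_div_cancel₀ _ (Complex.ofReal_ne_zero.2 hs.ne'),
    ← mul_Kfun_eq μ (Complex.slitPlane_ne_zero hp), mul_right_comm, mul_comm]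
end

section
/- Let μ be a continuous non-negative function on [0,1], not identically zero, three times continuously differentiable, with μ(1) ≠ 0, and suppose either μ(0) ≠ 0 or μ(α) ∼ a α^ν as α → 0⁺ for some a > 0, ν > 0. Let k(s) = ∫₀¹ (s^{−α}/Γ(1−α)) μ(α) dα, and let κ : (0,∞) → ℝ be continuous and locally integrable with absolutely convergent Laplace transform ∫₀^∞ e^{−pt} κ(t) dt = 1/(p K(p)) for every real p > 0. Then κ is a Sonine kernel for k: ∫₀ᵗ k(t−s) κ(s) ds = 1 for almost every t > 0. -/
open MeasureTheory Filter Set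
open scoped ENNReal Convolution

/-- `K(p) = ∫₀¹ p^{α-1} μ(α) dα` for real `p > 0`. -/
noncomputable def Kreal (μ : ℝ → ℝ) (p : ℝ) : ℝ :=
  ∫ α in (0:ℝ)..1, p ^ (α - 1) * μ α


lemma aux_integrableOn_rpow_exp {α p : ℝ} (hα : α < 1) (hp : 0 < p) :
    IntegrableOn (fun t : ℝ => Real.exp (-(p * t)) * t ^ (-α)) (Ioi 0) := by
  have h1 : (0:ℝ) < 1 - α := by linarith
  have base := Real.GammaIntegral_convergent h1
  -- base : IntegrableOn (fun x => exp (-x) * x ^ (1 - α - 1)) (Ioi 0)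
  have h2 : IntegrableOn (fun t : ℝ => Real.exp (-(p * t)) * (p * t) ^ (1 - α - 1)) (Ioi 0) := by
    have := (integrableOn_Ioi_comp_mul_left_iff
      (fun x : ℝ => Real.exp (-x) * x ^ (1 - α - 1)) 0 hp).2 (by simpa using base)
    simpa using this
  have h3 := h2.const_mul (p ^ (α:ℝ))
  apply IntegrableOn.congr_fun h3 ?_ measurableSet_Ioi
  intro t ht
  have htp : (0:ℝ) < t := ht
  have : (p * t) ^ (1 - α - 1) = p ^ (1 - α - 1) * t ^ (1 - α - 1) :=
    Real.mul_rpow hp.le htp.le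
  have hpm : p ^ (α:ℝ) * p ^ ((1:ℝ) - α - 1) = 1 := by
    rw [← Real.rpow_add hp]; norm_num
  simp only
  rw [this, show (1:ℝ) - α - 1 = -α by ring] at *
  calc p ^ α * (Real.exp (-(p * t)) * (p ^ (-α) * t ^ (-α)))
      = (p ^ α * p ^ (-α)) * (Real.exp (-(p * t)) * t ^ (-α)) := by ring
    _ = Real.exp (-(p * t)) * t ^ (-α) := by rw [hpm, one_mul]

lemma aux_integral_rpow_exp {α p : ℝ} (hα : α < 1) (hp : 0 < p) :
    ∫ t in Ioi (0:ℝ), Real.exp (-(p * t)) * t ^ (-α)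
      = p ^ (α - 1) * Real.Gamma (1 - α) := by
  have h1 : (0:ℝ) < 1 - α := by linarith
  have := Real.integral_rpow_mul_exp_neg_mul_Ioi h1 hp
  rw [show (1:ℝ) - α - 1 = -α by ring] at this
  rw [show (∫ t in Ioi (0:ℝ), Real.exp (-(p * t)) * t ^ (-α))
      = ∫ t in Ioi (0:ℝ), t ^ (-α) * Real.exp (-(p * t)) by
    exact setIntegral_congr_fun measurableSet_Ioi fun t ht => mul_comm _ _]
  rw [this, one_div, ← Real.rpow_one p, ← Real.rpow_neg hp.le, ← Real.rpow_mul hp.le]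
  norm_num [mul_comm]


lemma aux_contOn_rpow {p : ℝ} (hp : 0 < p) :
    Continuous (fun α : ℝ => p ^ (α - 1)) := by
  have : (fun α : ℝ => p ^ (α - 1)) = fun α => Real.exp ((α - 1) * Real.log p) := by
    funext α; rw [Real.rpow_def_of_pos hp, mul_comm]
  rw [this]; fun_prop

lemma aux_Kreal_integrableOn (μ : ℝ → ℝ) (hc : ContinuousOn μ (Set.Icc 0 1))
    {p : ℝ} (hp : 0 < p) :
    IntegrableOn (fun α => p ^ (α - 1) * μ α) (Set.Icc 0 1) := by
  exact (((aux_contOn_rpow hp).continuousOn).mul hc).integrableOn_Icc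

lemma aux_Kreal_pos (μ : ℝ → ℝ) (hc : ContinuousOn μ (Set.Icc 0 1))
    (hnn : ∀ α ∈ Set.Icc (0:ℝ) 1, 0 ≤ μ α) (h1 : μ 1 ≠ 0)
    {p : ℝ} (hp : 0 < p) : 0 < Kreal μ p := by
  have hμ1 : 0 < μ 1 := lt_of_le_of_ne (hnn 1 (by norm_num)) (Ne.symm h1)
  have hcw : ContinuousWithinAt μ (Set.Icc 0 1) 1 := hc 1 (by norm_num)
  have hev : ∀ᶠ α in nhdsWithin 1 (Set.Icc 0 1), 0 < μ α :=
    hcw.eventually (eventually_gt_nhds hμ1)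
  obtain ⟨δ, hδ, hδs⟩ := Metric.mem_nhdsWithin_iff.mp hev
  set δ' := min δ 1 with hδ'def
  have hδ' : 0 < δ' := lt_min hδ one_pos
  have hδ'le1 : δ' ≤ 1 := min_le_right _ _
  have hsub : Ioo (1 - δ') 1 ⊆ Function.support (fun α => p ^ (α - 1) * μ α) ∩ Ioc 0 1 := by
    intro α hα
    have hα1 : α ∈ Set.Icc (0:ℝ) 1 := ⟨by linarith [hα.1], hα.2.le⟩
    have hdist : dist α 1 < δ := by
      rw [Real.dist_eq, abs_lt]
      constructor <;> [linarith [hα.1, min_le_left δ 1]; linarith [hα.2, hδ]]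
    have hμα : 0 < μ α := hδs ⟨Metric.mem_ball.mpr hdist, hα1⟩
    refine ⟨?_, ⟨by linarith [hα.1], hα.2.le⟩⟩
    simp only [Function.mem_support]
    positivity
  have hKint : IntegrableOn (fun α => p ^ (α - 1) * μ α) (Ioc 0 1) :=
    (aux_Kreal_integrableOn μ hc hp).mono_set Ioc_subset_Icc_self
  have hnn' : 0 ≤ᵐ[volume.restrict (Ioc (0:ℝ) 1)] fun α => p ^ (α - 1) * μ α := by
    filter_upwards [ae_restrict_mem measurableSet_Ioc] with α hα
    exact mul_nonneg (Real.rpow_nonneg hp.le _) (hnn α ⟨hα.1.le, hα.2⟩)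
  have hpos : 0 < ∫ α in Ioc (0:ℝ) 1, p ^ (α - 1) * μ α := by
    rw [setIntegral_pos_iff_support_of_nonneg_ae hnn' hKint]
    calc (0:ℝ≥0∞) < ENNReal.ofReal δ' := by simpa using hδ'
      _ = volume (Ioo (1 - δ') 1) := by rw [Real.volume_Ioo]; norm_num
      _ ≤ _ := measure_mono hsub
  rw [Kreal, intervalIntegral.integral_of_le zero_le_one]
  exact hpos


lemma aux_lap_kker (μ : ℝ → ℝ) (hc : ContinuousOn μ (Set.Icc 0 1))
    (hnn : ∀ α ∈ Set.Icc (0:ℝ) 1, 0 ≤ μ α) {p : ℝ} (hp : 0 < p) :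
    IntegrableOn (fun t => Real.exp (-(p * t)) * kker μ t) (Ioi 0) ∧
    ∫ t in Ioi (0:ℝ), Real.exp (-(p * t)) * kker μ t = Kreal μ p := by
  set m1 := volume.restrict (Ioo (0:ℝ) 1) with hm1
  set m2 := volume.restrict (Ioi (0:ℝ)) with hm2
  set g : ℝ → ℝ := fun α => μ α / Real.Gamma (1 - α) with hg
  -- continuity of Gamma part
  have hGcont : ContinuousOn (fun α : ℝ => Real.Gamma (1 - α)) (Ioo 0 1) := by
    intro α hα
    have h1α : (0:ℝ) < 1 - α := by linarith [hα.2]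
    have hG : ContinuousAt Real.Gamma (1 - α) :=
      (Real.differentiableAt_Gamma (fun m => by
        have : -(m:ℝ) ≤ 0 := neg_nonpos.mpr (Nat.cast_nonneg m)
        linarith)).continuousAt
    exact (hG.comp (by fun_prop : ContinuousAt (fun α : ℝ => 1 - α) α)).continuousWithinAt
  have hGne : ∀ α ∈ Ioo (0:ℝ) 1, Real.Gamma (1 - α) ≠ 0 := by
    intro α hα
    exact (Real.Gamma_pos_of_pos (by linarith [hα.2])).ne'
  have hgcont : ContinuousOn g (Ioo 0 1) :=
    (hc.mono Ioo_subset_Icc_self).div hGcont hGne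
  have hgm : AEMeasurable g m1 := hgcont.aemeasurable measurableSet_Ioo
  -- the two-variable function
  set Φ : ℝ × ℝ → ℝ :=
    fun q => Real.exp (-(p * q.2)) * Real.exp (-q.1 * Real.log q.2) * g q.1 with hΦ
  have hΦm : AEStronglyMeasurable Φ (m1.prod m2) := by
    have h1 : Measurable fun q : ℝ × ℝ =>
        Real.exp (-(p * q.2)) * Real.exp (-q.1 * Real.log q.2) := by
      apply Measurable.mul
      · exact (Real.measurable_exp.comp ((measurable_const.mul measurable_snd).neg))
      · exact (Real.measurable_exp.comp ((measurable_fst.neg).mul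
          (Real.measurable_log.comp measurable_snd)))
    have h2 : AEMeasurable (fun q : ℝ × ℝ => g q.1) (m1.prod m2) :=
      hgm.comp_quasiMeasurePreserving MeasureTheory.Measure.quasiMeasurePreserving_fst
    exact (h1.aemeasurable.mul h2).aestronglyMeasurable
  -- pointwise identifications
  have hΦeq : ∀ α ∈ Ioo (0:ℝ) 1, ∀ t ∈ Ioi (0:ℝ),
      Φ (α, t) = (Real.exp (-(p * t)) * t ^ (-α)) * g α := by
    intro α hα t ht
    simp only [hΦ]
    rw [Real.rpow_def_of_pos ht]
    ring_nf
  -- slice integrability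
  have hslice : ∀ α ∈ Ioo (0:ℝ) 1, Integrable (fun t => Φ (α, t)) m2 := by
    intro α hα
    have := (aux_integrableOn_rpow_exp hα.2 hp).mul_const (g α)
    exact IntegrableOn.congr_fun this (fun t ht => (hΦeq α hα t ht).symm) measurableSet_Ioi
  -- slice integrals
  have hval : ∀ α ∈ Ioo (0:ℝ) 1, ∫ t, Φ (α, t) ∂m2 = p ^ (α - 1) * μ α := by
    intro α hα
    have : ∫ t, Φ (α, t) ∂m2 = ∫ t in Ioi (0:ℝ), (Real.exp (-(p * t)) * t ^ (-α)) * g α := by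
      exact setIntegral_congr_fun measurableSet_Ioi (fun t ht => hΦeq α hα t ht)
    rw [this, integral_mul_const, aux_integral_rpow_exp hα.2 hp, hg]
    field_simp [hGne α hα]
  -- nonnegativity of Φ on the relevant region
  have hΦnn : ∀ α ∈ Ioo (0:ℝ) 1, ∀ t ∈ Ioi (0:ℝ), 0 ≤ Φ (α, t) := by
    intro α hα t ht
    rw [hΦeq α hα t ht]
    have h1 : 0 ≤ g α := div_nonneg (hnn α ⟨hα.1.le, hα.2.le⟩)
      (Real.Gamma_pos_of_pos (by linarith [hα.2])).le
    have h2 : (0:ℝ) ≤ t ^ (-α) := Real.rpow_nonneg (le_of_lt ht) _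
    positivity
  -- product integrability
  have hInt : Integrable Φ (m1.prod m2) := by
    rw [integrable_prod_iff hΦm]
    constructor
    · filter_upwards [ae_restrict_mem measurableSet_Ioo] with α hα
      exact hslice α hα
    · have heq : ∀ α ∈ Ioo (0:ℝ) 1, (fun α => p ^ (α - 1) * μ α) α
          = ∫ t, ‖Φ (α, t)‖ ∂m2 := by
        intro α hα
        have : ∫ t, ‖Φ (α, t)‖ ∂m2 = ∫ t, Φ (α, t) ∂m2 := by
          apply setIntegral_congr_fun measurableSet_Ioi
          intro t ht
          exact Real.norm_of_nonneg (hΦnn α hα t ht)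
        rw [this, hval α hα]
      exact IntegrableOn.congr_fun
        ((aux_Kreal_integrableOn μ hc hp).mono_set Ioo_subset_Icc_self)
        heq measurableSet_Ioo
  -- marginal identification
  have hmarg : ∀ t ∈ Ioi (0:ℝ), ∫ α, Φ (α, t) ∂m1 = Real.exp (-(p * t)) * kker μ t := by
    intro t ht
    have h1 : ∫ α, Φ (α, t) ∂m1
        = ∫ α in Ioo (0:ℝ) 1, Real.exp (-(p * t)) * (t ^ (-α) / Real.Gamma (1 - α) * μ α) := by
      apply setIntegral_congr_fun measurableSet_Ioo
      intro α hα
      show Φ (α, t) = _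
      rw [hΦeq α hα t ht, hg]
      ring
    rw [h1, integral_const_mul, kker, intervalIntegral.integral_of_le zero_le_one,
      integral_Ioc_eq_integral_Ioo]
  constructor
  · exact IntegrableOn.congr_fun hInt.integral_prod_right
      (fun t ht => hmarg t ht) measurableSet_Ioi
  · have h2 : ∫ t in Ioi (0:ℝ), Real.exp (-(p * t)) * kker μ t
        = ∫ t, (∫ α, Φ (α, t) ∂m1) ∂m2 :=
      (setIntegral_congr_fun measurableSet_Ioi (fun t ht => hmarg t ht)).symm
    rw [h2, ← integral_integral_swap (f := fun α t => Φ (α, t)) (by exact hInt)]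
    have h3 : ∫ α, (∫ t, Φ (α, t) ∂m2) ∂m1 = ∫ α in Ioo (0:ℝ) 1, p ^ (α - 1) * μ α :=
      setIntegral_congr_fun measurableSet_Ioo (fun α hα => hval α hα)
    rw [h3, Kreal, intervalIntegral.integral_of_le zero_le_one, integral_Ioc_eq_integral_Ioo]


lemma aux_lap_conv (k κ : ℝ → ℝ) {p : ℝ} (hp : 0 < p)
    (hkint : IntegrableOn (fun u => Real.exp (-(p * u)) * k u) (Ioi 0))
    (hκint : IntegrableOn (fun s => Real.exp (-(p * s)) * κ s) (Ioi 0)) :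
    IntegrableOn (fun t => Real.exp (-(p * t)) * ∫ s in (0:ℝ)..t, k (t - s) * κ s) (Ioi 0) ∧
    ∫ t in Ioi (0:ℝ), Real.exp (-(p * t)) * ∫ s in (0:ℝ)..t, k (t - s) * κ s
      = (∫ s in Ioi (0:ℝ), Real.exp (-(p * s)) * κ s)
        * (∫ u in Ioi (0:ℝ), Real.exp (-(p * u)) * k u) := by
  classical
  set L : ℝ →L[ℝ] ℝ →L[ℝ] ℝ := ContinuousLinearMap.mul ℝ ℝ with hL
  set F : ℝ → ℝ := indicator (Ioi 0) (fun s => Real.exp (-(p * s)) * κ s) with hF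
  set G : ℝ → ℝ := indicator (Ioi 0) (fun u => Real.exp (-(p * u)) * k u) with hG
  have hFi : Integrable F := (integrable_indicator_iff measurableSet_Ioi).2 hκint
  have hGi : Integrable G := (integrable_indicator_iff measurableSet_Ioi).2 hkint
  have hFzero : ∀ s : ℝ, s ∉ Ioi (0:ℝ) → F s = 0 := fun s hs => indicator_of_notMem hs _
  have hGzero : ∀ s : ℝ, s ∉ Ioi (0:ℝ) → G s = 0 := fun s hs => indicator_of_notMem hs _
  have key2 : ∀ x ∈ Ioi (0:ℝ),
      (F ⋆[L] G) x = Real.exp (-(p * x)) * ∫ s in (0:ℝ)..x, k (x - s) * κ s := by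
    intro x hx
    have hx0 : (0:ℝ) < x := hx
    have hind : ∀ s : ℝ, L (F s) (G (x - s))
        = indicator (Ioo 0 x) (fun s => Real.exp (-(p * x)) * (k (x - s) * κ s)) s := by
      intro s
      by_cases hs1 : s ∈ Ioo (0:ℝ) x
      · have hsIoi : s ∈ Ioi (0:ℝ) := hs1.1
        have hxs : x - s ∈ Ioi (0:ℝ) := by simp [hs1.2]
        rw [indicator_of_mem hs1, hF, hG, indicator_of_mem hsIoi, indicator_of_mem hxs]
        simp only [hL, ContinuousLinearMap.mul_apply']
        have he : Real.exp (-(p * s)) * Real.exp (-(p * (x - s))) = Real.exp (-(p * x)) := by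
          rw [← Real.exp_add]; ring_nf
        linear_combination (κ s * k (x - s)) * he
      · rw [indicator_of_notMem hs1]
        rcases le_or_gt s 0 with h | h
        · rw [hFzero s (by simpa using h)]
          simp
        · have : x - s ∉ Ioi (0:ℝ) := by
            simp only [mem_Ioi, not_lt, sub_nonpos]
            by_contra hcon
            push_neg at hcon
            exact hs1 ⟨h, hcon⟩
          rw [hGzero _ this]
          simp
    rw [convolution_def]
    rw [integral_congr_ae (Eventually.of_forall hind), integral_indicator measurableSet_Ioo,
      integral_const_mul, intervalIntegral.integral_of_le hx0.le, integral_Ioc_eq_integral_Ioo]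
  have key1 : ∀ x : ℝ, x ∉ Ioi (0:ℝ) → (F ⋆[L] G) x = 0 := by
    intro x hx
    simp only [mem_Ioi, not_lt] at hx
    rw [convolution_def]
    apply integral_eq_zero_of_ae
    apply Eventually.of_forall
    intro s
    have hz : (L (F s)) (G (x - s)) = 0 := by
      rcases le_or_gt s 0 with h | h
      · rw [hFzero s (by simpa using h)]; simp
      · have hxs : x - s ∉ Ioi (0:ℝ) := by simp only [mem_Ioi, not_lt]; linarith
        rw [hGzero _ hxs]; simp
    simpa using hz
  have hconv : Integrable (F ⋆[L] G) volume := hFi.integrable_convolution L hGi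
  constructor
  · exact IntegrableOn.congr_fun hconv.integrableOn (fun x hx => key2 x hx) measurableSet_Ioi
  · have h1 : ∫ t in Ioi (0:ℝ), Real.exp (-(p * t)) * ∫ s in (0:ℝ)..t, k (t - s) * κ s
        = ∫ t in Ioi (0:ℝ), (F ⋆[L] G) t :=
      setIntegral_congr_fun measurableSet_Ioi (fun x hx => (key2 x hx).symm)
    rw [h1, setIntegral_eq_integral_of_forall_compl_eq_zero (fun x hx => key1 x hx),
      integral_convolution L hFi hGi]
    simp only [hL, ContinuousLinearMap.mul_apply']
    rw [hF, hG, integral_indicator measurableSet_Ioi, integral_indicator measurableSet_Ioi]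


lemma aux_lap_uniq (f : ℝ → ℝ) (hi : IntegrableOn f (Ioi 0))
    (hm : ∀ n : ℕ, ∫ t in Ioi (0:ℝ), Real.exp (-t) ^ n * f t = 0) :
    ∀ᵐ t : ℝ, t ∈ Ioi (0:ℝ) → f t = 0 := by
  apply isOpen_Ioi.ae_eq_zero_of_integral_contDiff_smul_eq_zero hi.locallyIntegrableOn
  intro g hg_smooth hg_supp hg_sub
  have hgz : ∀ x : ℝ, x ∉ Ioi (0:ℝ) → g x = 0 := fun x hx =>
    image_eq_zero_of_notMem_tsupport (fun hmem => hx (hg_sub hmem))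
  have h0 : ∫ x : ℝ, g x • f x = ∫ x in Ioi (0:ℝ), g x * f x := by
    rw [← setIntegral_eq_integral_of_forall_compl_eq_zero
      (s := Ioi (0:ℝ)) (f := fun x => g x • f x)
      (fun x hx => by show g x • f x = 0; rw [hgz x hx, zero_smul])]
    simp [smul_eq_mul]
  rw [h0]
  set I := ∫ x in Ioi (0:ℝ), g x * f x with hI
  set C := ∫ x in Ioi (0:ℝ), |f x| with hC
  have hC0 : 0 ≤ C := setIntegral_nonneg measurableSet_Ioi (fun x _ => abs_nonneg _)
  -- bound for support of g
  obtain ⟨R, hR⟩ := hg_supp.isBounded.subset_closedBall 0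
  have hgR : ∀ t : ℝ, R < |t| → g t = 0 := by
    intro t ht
    apply image_eq_zero_of_notMem_tsupport
    intro hmem
    have := hR hmem
    rw [Metric.mem_closedBall, Real.dist_eq, sub_zero] at this
    linarith
  -- the transferred function
  set ψ : ℝ → ℝ := fun x => if 0 < x then g (-Real.log x) else 0 with hψ
  have hψcont : ContinuousOn ψ (Icc 0 1) := by
    intro x hx
    rcases eq_or_lt_of_le hx.1 with h0x | h0x
    · -- x = 0
      subst h0x
      apply ContinuousWithinAt.congr_of_eventuallyEq
        (continuousWithinAt_const (b := (0:ℝ)))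
      · apply mem_nhdsWithin_of_mem_nhds
        have hmem : Iio (Real.exp (-(R+1))) ∈ nhds (0:ℝ) :=
          Iio_mem_nhds (Real.exp_pos _)
        filter_upwards [hmem] with y hy
        by_cases hy0 : 0 < y
        · have hylt : y < Real.exp (-(R+1)) := hy
          have hlog : Real.log y < -(R+1) := (Real.log_lt_iff_lt_exp hy0).2 hylt
          have hRlt : R < |-Real.log y| :=
            lt_of_lt_of_le (by linarith) (le_abs_self _)
          simp only [hψ, if_pos hy0]
          exact hgR _ hRlt
        · simp [hψ, if_neg hy0]
      · simp [hψ]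
    · -- 0 < x
      have hcc : ContinuousAt (fun y : ℝ => g (-Real.log y)) x :=
        (hg_smooth.continuous.continuousAt).comp
          ((Real.continuousAt_log (ne_of_gt h0x)).neg)
      have hev : ∀ᶠ y in nhds x, (fun y : ℝ => g (-Real.log y)) y = ψ y := by
        filter_upwards [Ioi_mem_nhds h0x] with y hy
        simp [hψ, if_pos (mem_Ioi.mp hy)]
      exact ((hcc.congr hev).continuousWithinAt)
  -- term integrability
  have hterm : ∀ n : ℕ, IntegrableOn (fun t => Real.exp (-t) ^ n * f t) (Ioi 0) := by
    intro n
    apply Integrable.mono hi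
    · exact (((Real.continuous_exp.comp continuous_neg).pow n).aestronglyMeasurable).mul
        hi.aestronglyMeasurable
    · filter_upwards [ae_restrict_mem measurableSet_Ioi] with t ht
      have h1 : Real.exp (-t) ≤ 1 := Real.exp_le_one_iff.mpr (by simp [(mem_Ioi.mp ht).le])
      have h2 : (0:ℝ) ≤ Real.exp (-t) := (Real.exp_pos _).le
      rw [Real.norm_eq_abs, Real.norm_eq_abs, abs_mul, abs_pow, abs_of_nonneg h2]
      nlinarith [abs_nonneg (f t), pow_le_one₀ h2 h1 (n := n), pow_nonneg h2 n]
  -- key estimate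
  have key : ∀ ε : ℝ, 0 < ε → |I| ≤ ε * C := by
    intro ε hε
    obtain ⟨q, hq⟩ := exists_polynomial_near_of_continuousOn 0 1 ψ hψcont ε hε
    set d := q.natDegree with hd
    set S : ℝ → ℝ := fun t => ∑ i ∈ Finset.range (d + 1),
      q.coeff i * (Real.exp (-t) ^ i * f t) with hS
    have hSint : IntegrableOn S (Ioi 0) :=
      integrable_finset_sum _ (fun i _ => (hterm i).const_mul _)
    have hSval : ∫ t in Ioi (0:ℝ), S t = 0 := by
      rw [integral_finset_sum _ (fun i _ => (hterm i).const_mul _)]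
      apply Finset.sum_eq_zero
      intro i _
      rw [integral_const_mul, hm i, mul_zero]
    have hSeq : ∀ t : ℝ, S t = Polynomial.eval (Real.exp (-t)) q * f t := by
      intro t
      rw [Polynomial.eval_eq_sum_range, Finset.sum_mul]
      apply Finset.sum_congr rfl
      intro i _
      ring
    have hgfi : IntegrableOn (fun t => g t * f t) (Ioi 0) := by
      obtain ⟨Cg, hCg⟩ := hg_supp.exists_bound_of_continuous hg_smooth.continuous
      exact hi.bdd_mul hg_smooth.continuous.aestronglyMeasurable
        (c := Cg) (Eventually.of_forall fun x => by simpa using hCg x)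
    have hsplit : I = ∫ t in Ioi (0:ℝ), (g t * f t - S t) := by
      rw [integral_sub hgfi hSint, hSval, sub_zero]
    rw [hsplit]
    have hbound : ∀ᵐ t ∂(volume.restrict (Ioi (0:ℝ))),
        ‖g t * f t - S t‖ ≤ ε * |f t| := by
      filter_upwards [ae_restrict_mem measurableSet_Ioi] with t ht
      have ht0 : (0:ℝ) < t := ht
      have hmem : Real.exp (-t) ∈ Icc (0:ℝ) 1 :=
        ⟨(Real.exp_pos _).le, Real.exp_le_one_iff.mpr (by linarith)⟩
      have hψval : ψ (Real.exp (-t)) = g t := by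
        simp [hψ, if_pos (Real.exp_pos (-t)), Real.log_exp]
      have := hq _ hmem
      rw [hSeq t]
      have : |g t - Polynomial.eval (Real.exp (-t)) q| ≤ ε := by
        rw [← hψval]
        rw [abs_sub_comm]
        exact (hq _ hmem).le
      calc ‖g t * f t - Polynomial.eval (Real.exp (-t)) q * f t‖
          = |g t - Polynomial.eval (Real.exp (-t)) q| * |f t| := by
            rw [Real.norm_eq_abs, ← abs_mul, sub_mul]
        _ ≤ ε * |f t| := by
            apply mul_le_mul_of_nonneg_right this (abs_nonneg _)
    calc ‖∫ t in Ioi (0:ℝ), (g t * f t - S t)‖ ≤ ∫ t in Ioi (0:ℝ), ε * |f t| :=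
          norm_integral_le_of_norm_le (hi.abs.const_mul ε) hbound
      _ = ε * C := by rw [integral_const_mul]
  -- conclude I = 0
  by_contra hne
  have hIpos : 0 < |I| := abs_pos.mpr hne
  have hkey := key (|I| / (2 * (C + 1))) (by positivity)
  have hpos : (0:ℝ) < 2 * (C + 1) := by linarith
  rw [div_mul_eq_mul_div, le_div_iff₀ hpos] at hkey
  nlinarith [hIpos, hC0]


lemma aux_integral_exp {p : ℝ} (hp : 0 < p) :
    ∫ t in Ioi (0:ℝ), Real.exp (-(p * t)) = 1 / p := by
  have h := aux_integral_rpow_exp (α := 0) (by norm_num) hp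
  simp only [neg_zero, Real.rpow_zero, mul_one, zero_sub, sub_zero, Real.Gamma_one] at h
  rw [h, Real.rpow_neg_one, one_div]

set_option maxHeartbeats 1000000 in
theorem distributed_order_kernel_is_Sonine (μ : ℝ → ℝ)
    (hc : ContinuousOn μ (Set.Icc 0 1))
    (hnn : ∀ α ∈ Set.Icc (0:ℝ) 1, 0 ≤ μ α)
    (hne : ∃ α ∈ Set.Icc (0:ℝ) 1, μ α ≠ 0)
    (hC3 : ContDiffOn ℝ 3 μ (Set.Icc 0 1))
    (h1 : μ 1 ≠ 0)
    (h0 : μ 0 ≠ 0 ∨ ∃ a ν : ℝ, 0 < a ∧ 0 < ν ∧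
      Tendsto (fun α : ℝ => μ α / (a * α ^ ν)) (nhdsWithin 0 (Set.Ioi 0)) (nhds 1))
    (κ : ℝ → ℝ) (hκc : ContinuousOn κ (Set.Ioi 0))
    (hκloc : LocallyIntegrableOn κ (Set.Ioi 0))
    (hlap : ∀ p : ℝ, 0 < p →
      IntegrableOn (fun t : ℝ => Real.exp (-p * t) * κ t) (Set.Ioi 0) ∧
      ∫ t in Set.Ioi (0:ℝ), Real.exp (-p * t) * κ t = 1 / (p * Kreal μ p)) :
    ∀ᵐ t : ℝ, 0 < t → ∫ s in (0:ℝ)..t, kker μ (t - s) * κ s = 1 := by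
  have hκ' : ∀ p : ℝ, 0 < p →
      IntegrableOn (fun t : ℝ => Real.exp (-(p * t)) * κ t) (Set.Ioi 0) ∧
      ∫ t in Set.Ioi (0:ℝ), Real.exp (-(p * t)) * κ t = 1 / (p * Kreal μ p) := by
    intro p hp
    have := hlap p hp
    simpa [neg_mul] using this
  have hk' : ∀ p : ℝ, 0 < p →
      IntegrableOn (fun t => Real.exp (-(p * t)) * kker μ t) (Ioi 0) ∧
      ∫ t in Ioi (0:ℝ), Real.exp (-(p * t)) * kker μ t = Kreal μ p :=
    fun p hp => aux_lap_kker μ hc hnn hp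
  set F : ℝ → ℝ := fun t => ∫ s in (0:ℝ)..t, kker μ (t - s) * κ s with hF
  -- Laplace transform of the convolution
  have hconv : ∀ p : ℝ, 0 < p →
      IntegrableOn (fun t => Real.exp (-(p * t)) * F t) (Ioi 0) ∧
      ∫ t in Ioi (0:ℝ), Real.exp (-(p * t)) * F t = 1 / p := by
    intro p hp
    have h := aux_lap_conv (kker μ) κ hp (hk' p hp).1 (hκ' p hp).1
    refine ⟨h.1, ?_⟩
    rw [h.2, (hκ' p hp).2, (hk' p hp).2]
    have hK := aux_Kreal_pos μ hc hnn h1 hp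
    field_simp
  set f : ℝ → ℝ := fun t => Real.exp (-t) * (F t - 1) with hf
  -- pointwise decomposition of the moments
  have hdec : ∀ n : ℕ, ∀ t : ℝ, Real.exp (-t) ^ n * f t
      = Real.exp (-(((n:ℝ) + 1) * t)) * F t - Real.exp (-(((n:ℝ) + 1) * t)) := by
    intro n t
    have he : Real.exp (-(((n:ℝ) + 1) * t)) = Real.exp (-t) ^ (n + 1) := by
      rw [show -(((n:ℝ) + 1) * t) = ((n:ℕ) + 1 : ℕ) * (-t) by push_cast; ring,
        Real.exp_nat_mul]
    simp only [hf]
    rw [he, pow_succ]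
    ring
  have hq : ∀ n : ℕ, (0:ℝ) < (n:ℝ) + 1 := fun n => by positivity
  have hmom : ∀ n : ℕ, ∫ t in Ioi (0:ℝ), Real.exp (-t) ^ n * f t = 0 := by
    intro n
    have h1' : ∫ t in Ioi (0:ℝ), Real.exp (-t) ^ n * f t
        = ∫ t in Ioi (0:ℝ),
            (Real.exp (-(((n:ℝ) + 1) * t)) * F t - Real.exp (-(((n:ℝ) + 1) * t))) :=
      setIntegral_congr_fun measurableSet_Ioi (fun t _ => hdec n t)
    have hexpint : IntegrableOn (fun t => Real.exp (-(((n:ℝ) + 1) * t))) (Ioi 0) := by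
      have h := exp_neg_integrableOn_Ioi 0 (hq n)
      apply h.congr_fun ?_ measurableSet_Ioi
      intro t _
      simp only []
      ring_nf
    rw [h1', integral_sub (hconv _ (hq n)).1 hexpint,
      (hconv _ (hq n)).2, aux_integral_exp (hq n), sub_self]
  have hfint : IntegrableOn f (Ioi 0) := by
    have hexpint : IntegrableOn (fun t => Real.exp (-((1:ℝ) * t))) (Ioi 0) := by
      have h := exp_neg_integrableOn_Ioi 0 one_pos
      apply h.congr_fun ?_ measurableSet_Ioi
      intro t _
      simp only []
      ring_nf
    have h2 : IntegrableOn
        (fun t => Real.exp (-((1:ℝ) * t)) * F t - Real.exp (-((1:ℝ) * t))) (Ioi 0) :=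
      (hconv 1 one_pos).1.sub hexpint
    apply IntegrableOn.congr_fun h2 ?_ measurableSet_Ioi
    intro t _
    simp only [hf, one_mul]
    ring
  have := aux_lap_uniq f hfint hmom
  filter_upwards [this] with t ht hpos
  have h3 : f t = 0 := ht hpos
  have h4 : Real.exp (-t) ≠ 0 := Real.exp_ne_zero _
  have h5 : F t - 1 = 0 := by
    rcases mul_eq_zero.mp h3 with h | h
    · exact absurd h h4
    · exact h
  have : F t = 1 := by linarith [h5]
  exact this
end
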